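/- arXiv:2311.07876 — 3 statements merged into one kernel-verified Lean document; each statement's English description precedes it below -/
import Mathlib

section
/- Suppose K = N·L for integers N, L ≥ 1. For each epoch i ∈ {1,…,N}, with k_i = (i−1)L+1 its first episode, fix a transition kernel P̂_i : S×𝒜 → Δ(S), and for each episode k ∈ {1,…,K} fix a cost function c_k : S×𝒜 → [0,2]. Define policies by: π̃_{k_i}(·|s) is the uniform distribution over 𝒜 for every epoch start k_i and every state s, and within each epoch, π̃_{k+1}(a|s) = π̃_k(a|s)·exp(−η Q_k(s,a)) / Σ_b π̃_k(b|s)·exp(−η Q_k(s,b)), where Q_k = Q_{P̂_i, c_k}^{π̃_k} is the state-action value of π̃_k under (P̂_i, c_k) and i is the epoch containing episode k. Set η = (1−γ)·√(ln A / (2L)). Then for every policy π* and every state s₀, Σ_{k=1}^{K} ( V_{P̂_{i(k)}, c_k}^{π̃_k}(s₀) − V_{P̂_{i(k)}, c_k}^{π*}(s₀) ) ≤ 2K√(2 ln A) / (√L · (1−γ)²), where i(k) denotes the epoch containing episode k. -/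
open Finset

noncomputable section

/-- Probability that the state at step `τ` equals `s`, when actions are drawn
from policy `π` and transitions from kernel `P`, starting at `s0`. -/
def stateDist {S A : Type*} [Fintype S] [Fintype A] [DecidableEq S]
    (P : S → A → S → ℝ) (π : S → A → ℝ) (s0 : S) : ℕ → S → ℝ
  | 0 => fun s => if s = s0 then 1 else 0
  | τ + 1 => fun s' => ∑ s, ∑ a, stateDist P π s0 τ s * π s a * P s a s'

/-- Discounted value `V_{P,ℓ}^π(s0) = Σ_{τ=0}^∞ γ^τ E[ℓ(s_τ,a_τ) | π, P, s0]`. -/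
def value {S A : Type*} [Fintype S] [Fintype A] [DecidableEq S] (γ : ℝ)
    (P : S → A → S → ℝ) (ℓ : S → A → ℝ) (π : S → A → ℝ) (s0 : S) : ℝ :=
  ∑' τ : ℕ, γ ^ τ * ∑ s, ∑ a, stateDist P π s0 τ s * π s a * ℓ s a

/-- State-action value `Q_{P,ℓ}^π(s,a) = ℓ(s,a) + γ Σ_{s'} P(s'|s,a) V_{P,ℓ}^π(s')`. -/
def qvalue {S A : Type*} [Fintype S] [Fintype A] [DecidableEq S] (γ : ℝ)
    (P : S → A → S → ℝ) (ℓ : S → A → ℝ) (π : S → A → ℝ) (s : S) (a : A) : ℝ :=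
  ℓ s a + γ * ∑ s', P s a s' * value γ P ℓ π s'

set_option linter.unusedSectionVars false
set_option linter.unusedVariables false
lemma exp_neg_le_quad {x : ℝ} (hx : 0 ≤ x) : Real.exp (-x) ≤ 1 - x + x ^ 2 / 2 := by
  have key : ∀ y ∈ Set.Ici (0:ℝ), 0 ≤ 1 - y + y ^ 2 / 2 - Real.exp (-y) := by
    have hmono : MonotoneOn (fun y : ℝ => 1 - y + y ^ 2 / 2 - Real.exp (-y)) (Set.Ici 0) := by
      apply monotoneOn_of_deriv_nonneg (convex_Ici 0)
      · fun_prop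
      · fun_prop
      · intro y hy
        have hy0 : 0 ≤ y := by simpa using interior_subset (s := Set.Ici (0:ℝ)) hy
        have : deriv (fun y : ℝ => 1 - y + y ^ 2 / 2 - Real.exp (-y)) y
            = -1 + y + Real.exp (-y) := by
          have h1 : HasDerivAt (fun y : ℝ => 1 - y + y ^ 2 / 2 - Real.exp (-y))
              (0 - 1 + 2 * y ^ 1 / 2 - Real.exp (-y) * (-1)) y := by
            have e1 : HasDerivAt (fun y : ℝ => Real.exp (-y)) (Real.exp (-y) * (-1)) y := by
              simpa [Function.comp_def] using (Real.hasDerivAt_exp (-y)).comp y (hasDerivAt_neg y)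
            have e2 : HasDerivAt (fun y : ℝ => y ^ 2 / 2) (2 * y ^ 1 / 2) y := by
              simpa using (hasDerivAt_pow 2 y).div_const 2
            exact (((hasDerivAt_const y (1:ℝ)).sub (hasDerivAt_id y)).add e2).sub e1
          rw [h1.deriv]; ring
        rw [this]
        nlinarith [Real.add_one_le_exp (-y)]
    intro y hy
    have := hmono (Set.self_mem_Ici) hy (by simpa using hy)
    simpa using this
  have := key x hx
  linarith

section MDP
variable {S A : Type*} [Fintype S] [Fintype A] [DecidableEq S]
variable {P : S → A → S → ℝ} {π : S → A → ℝ}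

lemma sd_nonneg (hP : ∀ s a s', 0 ≤ P s a s') (hπ : ∀ s a, 0 ≤ π s a)
    (s0 : S) : ∀ τ s, 0 ≤ stateDist P π s0 τ s := by
  intro τ
  induction τ with
  | zero => intro s; simp only [stateDist]; split <;> norm_num
  | succ τ ih =>
    intro s'
    simp only [stateDist]
    exact Finset.sum_nonneg fun s _ => Finset.sum_nonneg fun a _ =>
      mul_nonneg (mul_nonneg (ih s) (hπ s a)) (hP s a s')

lemma sd_sum (hP1 : ∀ s a, ∑ s', P s a s' = 1) (hπ1 : ∀ s, ∑ a, π s a = 1)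
    (s0 : S) : ∀ τ, ∑ s, stateDist P π s0 τ s = 1 := by
  intro τ
  induction τ with
  | zero => simp [stateDist]
  | succ τ ih =>
    simp only [stateDist]
    rw [Finset.sum_comm]
    calc ∑ s, ∑ s', ∑ a, stateDist P π s0 τ s * π s a * P s a s'
        = ∑ s, stateDist P π s0 τ s := by
          refine Finset.sum_congr rfl fun s _ => ?_
          rw [Finset.sum_comm]
          calc ∑ a, ∑ s', stateDist P π s0 τ s * π s a * P s a s'
              = ∑ a, stateDist P π s0 τ s * π s a := by
                refine Finset.sum_congr rfl fun a _ => ?_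
                rw [← Finset.mul_sum, hP1, mul_one]
            _ = stateDist P π s0 τ s := by rw [← Finset.mul_sum, hπ1, mul_one]
      _ = 1 := ih

lemma sum_rot3 {i1 i2 i3 : Type*} [Fintype i1] [Fintype i2] [Fintype i3]
    (f : i1 → i2 → i3 → ℝ) :
    ∑ x, ∑ y, ∑ z, f x y z = ∑ z, ∑ x, ∑ y, f x y z :=
  (Finset.sum_congr rfl fun _ _ => Finset.sum_comm).trans Finset.sum_comm

lemma sd_rec (s0 : S) (τ : ℕ) (s' : S) :
    stateDist P π s0 (τ + 1) s' =
      ∑ a, π s0 a * ∑ s1, P s0 a s1 * stateDist P π s1 τ s' := by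
  induction τ generalizing s0 s' with
  | zero =>
    show ∑ s, ∑ a, (if s = s0 then (1:ℝ) else 0) * π s a * P s a s'
        = ∑ a, π s0 a * ∑ s1, P s0 a s1 * (if s' = s1 then (1:ℝ) else 0)
    simp [ite_mul, mul_ite, Finset.sum_ite_eq, Finset.sum_ite_eq']
  | succ τ ih =>
    show ∑ s, ∑ a, stateDist P π s0 (τ+1) s * π s a * P s a s' = _
    calc ∑ s, ∑ a, stateDist P π s0 (τ+1) s * π s a * P s a s'
        = ∑ s, ∑ a, ∑ b, ∑ s1, π s0 b * P s0 b s1 * (stateDist P π s1 τ s * π s a * P s a s') := by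
          refine Finset.sum_congr rfl fun s _ => Finset.sum_congr rfl fun a _ => ?_
          rw [ih s0 s, Finset.sum_mul, Finset.sum_mul]
          refine Finset.sum_congr rfl fun b _ => ?_
          rw [Finset.mul_sum, Finset.sum_mul, Finset.sum_mul]
          exact Finset.sum_congr rfl fun s1 _ => by ring
      _ = ∑ b, ∑ s, ∑ a, ∑ s1, π s0 b * P s0 b s1 * (stateDist P π s1 τ s * π s a * P s a s') := by
          rw [sum_rot3 (f := fun s a b => ∑ s1, π s0 b * P s0 b s1 *
            (stateDist P π s1 τ s * π s a * P s a s'))]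
      _ = ∑ b, ∑ s1, ∑ s, ∑ a, π s0 b * P s0 b s1 * (stateDist P π s1 τ s * π s a * P s a s') := by
          refine Finset.sum_congr rfl fun b _ => ?_
          rw [sum_rot3 (f := fun s a s1 => π s0 b * P s0 b s1 *
            (stateDist P π s1 τ s * π s a * P s a s'))]
      _ = ∑ b, π s0 b * ∑ s1, P s0 b s1 * stateDist P π s1 (τ+1) s' := by
          refine Finset.sum_congr rfl fun b _ => ?_
          rw [Finset.mul_sum]
          refine Finset.sum_congr rfl fun s1 _ => ?_
          show _ = π s0 b * (P s0 b s1 * ∑ s, ∑ a, stateDist P π s1 τ s * π s a * P s a s')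
          rw [Finset.mul_sum, Finset.mul_sum]
          refine Finset.sum_congr rfl fun s _ => ?_
          rw [Finset.mul_sum, Finset.mul_sum]
          exact Finset.sum_congr rfl fun a _ => by ring

end MDP

section MDP2
variable {S A : Type*} [Fintype S] [Fintype A] [DecidableEq S]
variable {γ : ℝ} {P : S → A → S → ℝ} {π : S → A → ℝ} {ℓ : S → A → ℝ} {B : ℝ}

structure MDPOk (γ : ℝ) (P : S → A → S → ℝ) (π : S → A → ℝ) (ℓ : S → A → ℝ) (B : ℝ) : Prop where
  hγ0 : 0 ≤ γ
  hγ1 : γ < 1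
  hP0 : ∀ s a s', 0 ≤ P s a s'
  hP1 : ∀ s a, ∑ s', P s a s' = 1
  hπ0 : ∀ s a, 0 ≤ π s a
  hπ1 : ∀ s, ∑ a, π s a = 1
  hℓ0 : ∀ s a, 0 ≤ ℓ s a
  hℓB : ∀ s a, ℓ s a ≤ B

lemma MDPOk.hB (h : MDPOk γ P π ℓ B) [Nonempty S] [Nonempty A] : 0 ≤ B :=
  le_trans (h.hℓ0 (Classical.arbitrary S) (Classical.arbitrary A))
    (h.hℓB (Classical.arbitrary S) (Classical.arbitrary A))

lemma inner_nonneg (h : MDPOk γ P π ℓ B) (s0 : S) (τ : ℕ) :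
    0 ≤ ∑ s, ∑ a, stateDist P π s0 τ s * π s a * ℓ s a :=
  Finset.sum_nonneg fun s _ => Finset.sum_nonneg fun a _ =>
    mul_nonneg (mul_nonneg (sd_nonneg h.hP0 h.hπ0 s0 τ s) (h.hπ0 s a)) (h.hℓ0 s a)

lemma inner_le (h : MDPOk γ P π ℓ B) (hB : 0 ≤ B) (s0 : S) (τ : ℕ) :
    ∑ s, ∑ a, stateDist P π s0 τ s * π s a * ℓ s a ≤ B := by
  calc ∑ s, ∑ a, stateDist P π s0 τ s * π s a * ℓ s a
      ≤ ∑ s, ∑ a, stateDist P π s0 τ s * π s a * B := by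
        refine Finset.sum_le_sum fun s _ => Finset.sum_le_sum fun a _ => ?_
        exact mul_le_mul_of_nonneg_left (h.hℓB s a)
          (mul_nonneg (sd_nonneg h.hP0 h.hπ0 s0 τ s) (h.hπ0 s a))
    _ = B := by
        have : ∀ s, ∑ a, stateDist P π s0 τ s * π s a * B = stateDist P π s0 τ s * B := by
          intro s
          rw [show ∀ x : A → ℝ, (∑ a, stateDist P π s0 τ s * x a * B)
              = (∑ a, x a) * (stateDist P π s0 τ s * B) from fun x => by
            rw [Finset.sum_mul]; exact Finset.sum_congr rfl fun a _ => by ring, h.hπ1 s, one_mul]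
        rw [Finset.sum_congr rfl fun s _ => this s, ← Finset.sum_mul, sd_sum h.hP1 h.hπ1 s0 τ,
          one_mul]

lemma value_hasSum (h : MDPOk γ P π ℓ B) (hB : 0 ≤ B) (s0 : S) :
    HasSum (fun τ => γ ^ τ * ∑ s, ∑ a, stateDist P π s0 τ s * π s a * ℓ s a)
      (value γ P ℓ π s0) := by
  refine Summable.hasSum ?_
  refine Summable.of_nonneg_of_le (fun τ => ?_) (fun τ => ?_)
    ((summable_geometric_of_lt_one h.hγ0 h.hγ1).mul_right B)
  · exact mul_nonneg (pow_nonneg h.hγ0 τ) (inner_nonneg h s0 τ)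
  · exact mul_le_mul_of_nonneg_left (inner_le h hB s0 τ) (pow_nonneg h.hγ0 τ)

lemma value_nonneg (h : MDPOk γ P π ℓ B) (hB : 0 ≤ B) (s0 : S) : 0 ≤ value γ P ℓ π s0 :=
  (value_hasSum h hB s0).nonneg fun τ =>
    mul_nonneg (pow_nonneg h.hγ0 τ) (inner_nonneg h s0 τ)

lemma value_le (h : MDPOk γ P π ℓ B) (hB : 0 ≤ B) (s0 : S) :
    value γ P ℓ π s0 ≤ B / (1 - γ) := by
  have hg : HasSum (fun τ : ℕ => γ ^ τ * B) ((1 - γ)⁻¹ * B) :=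
    (hasSum_geometric_of_lt_one h.hγ0 h.hγ1).mul_right B
  have := hasSum_le (fun τ => mul_le_mul_of_nonneg_left (inner_le h hB s0 τ)
    (pow_nonneg h.hγ0 τ)) (value_hasSum h hB s0) hg
  rw [div_eq_inv_mul]; exact this

lemma qvalue_nonneg (h : MDPOk γ P π ℓ B) (hB : 0 ≤ B) (s : S) (a : A) :
    0 ≤ qvalue γ P ℓ π s a :=
  add_nonneg (h.hℓ0 s a) (mul_nonneg h.hγ0 (Finset.sum_nonneg fun s' _ =>
    mul_nonneg (h.hP0 s a s') (value_nonneg h hB s')))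

lemma qvalue_le (h : MDPOk γ P π ℓ B) (hB : 0 ≤ B) (s : S) (a : A) :
    qvalue γ P ℓ π s a ≤ B / (1 - γ) := by
  have h1γ : 0 < 1 - γ := by linarith [h.hγ1]
  have hsum : ∑ s', P s a s' * value γ P ℓ π s' ≤ B / (1 - γ) := by
    calc ∑ s', P s a s' * value γ P ℓ π s' ≤ ∑ s', P s a s' * (B / (1 - γ)) :=
          Finset.sum_le_sum fun s' _ =>
            mul_le_mul_of_nonneg_left (value_le h hB s') (h.hP0 s a s')
      _ = B / (1 - γ) := by rw [← Finset.sum_mul, h.hP1, one_mul]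
  calc qvalue γ P ℓ π s a ≤ B + γ * (B / (1 - γ)) := by
        exact add_le_add (h.hℓB s a) (mul_le_mul_of_nonneg_left hsum h.hγ0)
    _ = B / (1 - γ) := by field_simp; ring
  
lemma value_bellman (h : MDPOk γ P π ℓ B) (hB : 0 ≤ B) (s0 : S) :
    value γ P ℓ π s0 = ∑ a, π s0 a * qvalue γ P ℓ π s0 a := by
  have hsummable := (value_hasSum h hB s0).summable
  have h0 : γ ^ 0 * ∑ s, ∑ a, stateDist P π s0 0 s * π s a * ℓ s a
      = ∑ a, π s0 a * ℓ s0 a := by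
    show (1:ℝ) * ∑ s, ∑ a, (if s = s0 then (1:ℝ) else 0) * π s a * ℓ s a = _
    simp [ite_mul, Finset.sum_ite_eq']
  -- the shifted sum
  have hshift : ∀ τ : ℕ, γ ^ (τ + 1) * ∑ s, ∑ a, stateDist P π s0 (τ+1) s * π s a * ℓ s a
      = ∑ b, ∑ s1, (γ * (π s0 b * P s0 b s1)) *
          (γ ^ τ * ∑ s, ∑ a, stateDist P π s1 τ s * π s a * ℓ s a) := by
    intro τ
    have key : ∑ s, ∑ a, stateDist P π s0 (τ+1) s * π s a * ℓ s a
        = ∑ b, ∑ s1, (π s0 b * P s0 b s1) *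
            ∑ s, ∑ a, stateDist P π s1 τ s * π s a * ℓ s a := by
      calc ∑ s, ∑ a, stateDist P π s0 (τ+1) s * π s a * ℓ s a
          = ∑ s, ∑ a, ∑ b, ∑ s1, (π s0 b * P s0 b s1) *
              (stateDist P π s1 τ s * π s a * ℓ s a) := by
            refine Finset.sum_congr rfl fun s _ => Finset.sum_congr rfl fun a _ => ?_
            rw [sd_rec, Finset.sum_mul, Finset.sum_mul]
            refine Finset.sum_congr rfl fun b _ => ?_
            rw [Finset.mul_sum, Finset.sum_mul, Finset.sum_mul]
            exact Finset.sum_congr rfl fun s1 _ => by ring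
        _ = ∑ b, ∑ s, ∑ a, ∑ s1, (π s0 b * P s0 b s1) *
              (stateDist P π s1 τ s * π s a * ℓ s a) := by
            rw [sum_rot3 (f := fun s a b => ∑ s1, (π s0 b * P s0 b s1) *
              (stateDist P π s1 τ s * π s a * ℓ s a))]
        _ = ∑ b, ∑ s1, ∑ s, ∑ a, (π s0 b * P s0 b s1) *
              (stateDist P π s1 τ s * π s a * ℓ s a) := by
            refine Finset.sum_congr rfl fun b _ => ?_
            rw [sum_rot3 (f := fun s a s1 => (π s0 b * P s0 b s1) *
              (stateDist P π s1 τ s * π s a * ℓ s a))]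
        _ = ∑ b, ∑ s1, (π s0 b * P s0 b s1) *
              ∑ s, ∑ a, stateDist P π s1 τ s * π s a * ℓ s a := by
            refine Finset.sum_congr rfl fun b _ => Finset.sum_congr rfl fun s1 _ => ?_
            rw [Finset.mul_sum]
            refine Finset.sum_congr rfl fun s _ => ?_
            rw [Finset.mul_sum]
    rw [key, Finset.mul_sum]
    refine Finset.sum_congr rfl fun b _ => ?_
    rw [Finset.mul_sum]
    refine Finset.sum_congr rfl fun s1 _ => ?_
    rw [pow_succ]; ring
  have htail : HasSum (fun τ => γ ^ (τ+1) * ∑ s, ∑ a, stateDist P π s0 (τ+1) s * π s a * ℓ s a)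
      (∑ b, ∑ s1, (γ * (π s0 b * P s0 b s1)) * value γ P ℓ π s1) := by
    have : HasSum (fun τ => ∑ b, ∑ s1, (γ * (π s0 b * P s0 b s1)) *
        (γ ^ τ * ∑ s, ∑ a, stateDist P π s1 τ s * π s a * ℓ s a))
        (∑ b, ∑ s1, (γ * (π s0 b * P s0 b s1)) * value γ P ℓ π s1) := by
      refine hasSum_sum fun b _ => ?_
      refine hasSum_sum fun s1 _ => ?_
      exact (value_hasSum h hB s1).mul_left _
    exact this.congr_fun fun τ => hshift τ
  have := (value_hasSum h hB s0)
  rw [value, Summable.tsum_eq_zero_add hsummable, h0, htail.tsum_eq]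
  have : ∀ a, π s0 a * qvalue γ P ℓ π s0 a
      = π s0 a * ℓ s0 a + ∑ s1, (γ * (π s0 a * P s0 a s1)) * value γ P ℓ π s1 := by
    intro a
    rw [qvalue, mul_add, Finset.mul_sum]
    congr 1
    · rw [Finset.mul_sum]
      exact Finset.sum_congr rfl fun s1 _ => by ring
  rw [Finset.sum_congr rfl fun a _ => this a, Finset.sum_add_distrib]

end MDP2

section PDL
variable {S A : Type*} [Fintype S] [Fintype A] [DecidableEq S]
variable {γ : ℝ} {P : S → A → S → ℝ} {π ρ : S → A → ℝ} {ℓ : S → A → ℝ} {B : ℝ}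

lemma hasSum_of_tendsto_of_summable {g : ℕ → ℝ} (hg : Summable g) {a : ℝ}
    (h : Filter.Tendsto (fun n => ∑ i ∈ Finset.range n, g i) Filter.atTop (nhds a)) :
    HasSum g a := by
  have h2 := hg.hasSum
  rwa [tendsto_nhds_unique h2.tendsto_sum_nat h] at h2

/-- Performance difference lemma. -/
lemma pdl (h : MDPOk γ P π ℓ B) (hρ : MDPOk γ P ρ ℓ B) (hB : 0 ≤ B) (s0 : S) :
    HasSum (fun τ => γ ^ τ * ∑ s, stateDist P ρ s0 τ s *
        ∑ a, (π s a - ρ s a) * qvalue γ P ℓ π s a)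
      (value γ P ℓ π s0 - value γ P ℓ ρ s0) := by
  have h1γ : 0 < 1 - γ := by linarith [h.hγ1]
  set d := stateDist P ρ s0 with hd
  set V := value γ P ℓ π with hV
  set Q := qvalue γ P ℓ π with hQ
  set W : ℕ → ℝ := fun τ => ∑ s, d τ s * V s with hW
  -- Step A
  have stepA : ∀ s, ∑ a, (π s a - ρ s a) * Q s a = V s - ∑ a, ρ s a * Q s a := by
    intro s
    have := value_bellman h hB s
    rw [hV, this]
    rw [← Finset.sum_sub_distrib]
    exact Finset.sum_congr rfl fun a _ => by ring
  -- Step B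
  have stepB : ∀ τ, ∑ s, d τ s * ∑ a, ρ s a * Q s a
      = (∑ s, ∑ a, d τ s * ρ s a * ℓ s a) + γ * ∑ s', d (τ+1) s' * V s' := by
    intro τ
    have expand : ∀ s, ∑ a, ρ s a * Q s a
        = ∑ a, ρ s a * ℓ s a + γ * ∑ a, ∑ s', ρ s a * P s a s' * V s' := by
      intro s
      rw [Finset.mul_sum, ← Finset.sum_add_distrib]
      refine Finset.sum_congr rfl fun a _ => ?_
      simp only [hQ, qvalue, hV, mul_add, Finset.mul_sum]
      congr 1
      exact Finset.sum_congr rfl fun s' _ => by ring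
    calc ∑ s, d τ s * ∑ a, ρ s a * Q s a
        = (∑ s, ∑ a, d τ s * ρ s a * ℓ s a)
            + γ * ∑ s, ∑ a, ∑ s', d τ s * ρ s a * P s a s' * V s' := by
          rw [Finset.mul_sum, ← Finset.sum_add_distrib]
          refine Finset.sum_congr rfl fun s _ => ?_
          rw [expand s, mul_add]
          congr 1
          · rw [Finset.mul_sum]; exact Finset.sum_congr rfl fun a _ => by ring
          · rw [show d τ s * (γ * ∑ a, ∑ s', ρ s a * P s a s' * V s')
                = γ * (d τ s * ∑ a, ∑ s', ρ s a * P s a s' * V s') from by ring]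
            congr 1
            rw [Finset.mul_sum]
            refine Finset.sum_congr rfl fun a _ => ?_
            rw [Finset.mul_sum]
            exact Finset.sum_congr rfl fun s' _ => by ring
      _ = (∑ s, ∑ a, d τ s * ρ s a * ℓ s a) + γ * ∑ s', d (τ+1) s' * V s' := by
          congr 1
          congr 1
          calc ∑ s, ∑ a, ∑ s', d τ s * ρ s a * P s a s' * V s'
              = ∑ s', ∑ s, ∑ a, d τ s * ρ s a * P s a s' * V s' :=
                sum_rot3 (f := fun s a s' => d τ s * ρ s a * P s a s' * V s')
            _ = ∑ s', d (τ+1) s' * V s' := by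
                refine Finset.sum_congr rfl fun s' _ => ?_
                show _ = (∑ s, ∑ a, d τ s * ρ s a * P s a s') * V s'
                rw [Finset.sum_mul]
                refine Finset.sum_congr rfl fun s _ => ?_
                rw [Finset.sum_mul]
  -- the function in the statement equals telescoping minus cost term
  have hfun : ∀ τ, γ ^ τ * ∑ s, d τ s * ∑ a, (π s a - ρ s a) * Q s a
      = (γ ^ τ * W τ - γ ^ (τ+1) * W (τ+1))
        - γ ^ τ * ∑ s, ∑ a, d τ s * ρ s a * ℓ s a := by
    intro τ
    have : ∑ s, d τ s * ∑ a, (π s a - ρ s a) * Q s a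
        = W τ - ((∑ s, ∑ a, d τ s * ρ s a * ℓ s a) + γ * W (τ+1)) := by
      rw [show ∑ s, d τ s * ∑ a, (π s a - ρ s a) * Q s a
          = (∑ s, d τ s * V s) - ∑ s, d τ s * ∑ a, ρ s a * Q s a from by
        rw [← Finset.sum_sub_distrib]
        exact Finset.sum_congr rfl fun s _ => by rw [stepA s]; ring]
      rw [stepB τ]
    rw [this, pow_succ]; ring
  -- bound on W
  have hWbound : ∀ τ, |W τ| ≤ B / (1 - γ) := by
    intro τ
    have h1 : W τ ≤ B / (1 - γ) := by
      calc W τ ≤ ∑ s, d τ s * (B / (1-γ)) := Finset.sum_le_sum fun s _ =>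
            mul_le_mul_of_nonneg_left (value_le h hB s)
              (sd_nonneg hρ.hP0 hρ.hπ0 s0 τ s)
        _ = B / (1-γ) := by rw [← Finset.sum_mul, sd_sum hρ.hP1 hρ.hπ1, one_mul]
    have h2 : 0 ≤ W τ := Finset.sum_nonneg fun s _ =>
      mul_nonneg (sd_nonneg hρ.hP0 hρ.hπ0 s0 τ s) (value_nonneg h hB s)
    rw [abs_of_nonneg h2]; exact h1
  -- telescoping has sum
  have htel : HasSum (fun τ => γ ^ τ * W τ - γ ^ (τ+1) * W (τ+1)) (W 0) := by
    have hsummable : Summable (fun τ => γ ^ τ * W τ - γ ^ (τ+1) * W (τ+1)) := by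
      apply Summable.sub
      · apply Summable.of_norm_bounded (g := fun τ => γ ^ τ * (B / (1-γ)))
          ((summable_geometric_of_lt_one h.hγ0 h.hγ1).mul_right _)
        intro τ
        rw [Real.norm_eq_abs, abs_mul, abs_of_nonneg (pow_nonneg h.hγ0 τ)]
        exact mul_le_mul_of_nonneg_left (hWbound τ) (pow_nonneg h.hγ0 τ)
      · apply Summable.of_norm_bounded (g := fun τ => γ ^ (τ+1) * (B / (1-γ)))
          (((summable_geometric_of_lt_one h.hγ0 h.hγ1).mul_right (B/(1-γ))).comp_injective
            (add_left_injective 1))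
        intro τ
        rw [Real.norm_eq_abs, abs_mul, abs_of_nonneg (pow_nonneg h.hγ0 _)]
        exact mul_le_mul_of_nonneg_left (hWbound _) (pow_nonneg h.hγ0 _)
    apply hasSum_of_tendsto_of_summable hsummable
    have hps : ∀ n, ∑ i ∈ Finset.range n, (γ ^ i * W i - γ ^ (i+1) * W (i+1))
        = γ ^ 0 * W 0 - γ ^ n * W n := Finset.sum_range_sub' (fun i => γ ^ i * W i)
    simp only [hps, pow_zero, one_mul]
    have hz : Filter.Tendsto (fun n => γ ^ n * W n) Filter.atTop (nhds 0) := by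
      refine squeeze_zero_norm (a := fun n => γ ^ n * (B / (1-γ))) (fun n => ?_) ?_
      · rw [Real.norm_eq_abs, abs_mul, abs_of_nonneg (pow_nonneg h.hγ0 n)]
        exact mul_le_mul_of_nonneg_left (hWbound n) (pow_nonneg h.hγ0 n)
      · have := (tendsto_pow_atTop_nhds_zero_of_lt_one h.hγ0 h.hγ1).mul_const (B / (1-γ))
        simpa using this
    simpa using (tendsto_const_nhds (x := W 0)).sub hz
  -- cost term has sum
  have hcost : HasSum (fun τ => γ ^ τ * ∑ s, ∑ a, d τ s * ρ s a * ℓ s a)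
      (value γ P ℓ ρ s0) := value_hasSum hρ hB s0
  have hW0 : W 0 = V s0 := by
    show ∑ s, (if s = s0 then (1:ℝ) else 0) * V s = V s0
    simp [ite_mul, Finset.sum_ite_eq']
  have := htel.sub hcost
  rw [hW0] at this
  exact this.congr_fun fun τ => hfun τ

end PDL

section Hedge
variable {A : Type*} [Fintype A]

/-- Exponential-weights (Hedge) regret bound. -/
lemma hedge (p q : ℕ → A → ℝ) (L : ℕ) (η M : ℝ) (hη : 0 < η) (hM : 0 ≤ M)
    (hp0 : ∀ a, p 0 a = 1 / (Fintype.card A : ℝ))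
    (hrec : ∀ j, j + 1 < L → ∀ a, p (j+1) a = p j a * Real.exp (-η * q j a) /
      ∑ b, p j b * Real.exp (-η * q j b))
    (hq0 : ∀ j, j < L → ∀ a, 0 ≤ q j a) (hqM : ∀ j, j < L → ∀ a, q j a ≤ M)
    (ρ : A → ℝ) (hρ0 : ∀ a, 0 ≤ ρ a) (hρ1 : ∑ a, ρ a = 1) :
    ∑ j ∈ Finset.range L, ∑ a, (p j a - ρ a) * q j a ≤
      Real.log (Fintype.card A) / η + η * L * M ^ 2 / 2 := by
  have hne : Nonempty A := by
    by_contra hemp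
    rw [not_nonempty_iff] at hemp
    rw [Finset.univ_eq_empty, Finset.sum_empty] at hρ1
    norm_num at hρ1
  have hcard : 0 < (Fintype.card A : ℝ) := by
    have := Fintype.card_pos (α := A); exact_mod_cast this
  set w : ℕ → A → ℝ := fun j a => p 0 a * Real.exp (-η * ∑ i ∈ Finset.range j, q i a) with hw
  set W : ℕ → ℝ := fun j => ∑ a, w j a with hW
  have hp0pos : ∀ a, 0 < p 0 a := fun a => by rw [hp0 a]; positivity
  have hwpos : ∀ j a, 0 < w j a := fun j a => mul_pos (hp0pos a) (Real.exp_pos _)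
  have hWpos : ∀ j, 0 < W j := fun j => Finset.sum_pos (fun a _ => hwpos j a) univ_nonempty
  have hwsucc : ∀ j a, w j a * Real.exp (-η * q j a) = w (j+1) a := by
    intro j a
    show p 0 a * Real.exp (-η * ∑ i ∈ Finset.range j, q i a) * Real.exp (-η * q j a)
      = p 0 a * Real.exp (-η * ∑ i ∈ Finset.range (j+1), q i a)
    rw [Finset.sum_range_succ, mul_assoc, ← Real.exp_add]
    congr 1
    ring
  have hp0sum : ∑ a, p 0 a = 1 := by
    rw [Finset.sum_congr rfl fun a _ => hp0 a, Finset.sum_const, Finset.card_univ,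
      nsmul_eq_mul]
    field_simp
  have hW0 : W 0 = 1 := by
    show ∑ a, p 0 a * Real.exp (-η * ∑ i ∈ Finset.range 0, q i a) = 1
    simp only [Finset.range_zero, Finset.sum_empty, mul_zero, neg_zero, Real.exp_zero, mul_one]
    exact hp0sum
  -- closed form
  have closed : ∀ j, j < L → ∀ a, p j a = w j a / W j := by
    intro j
    induction j with
    | zero =>
      intro _ a
      rw [hW0]
      show p 0 a = p 0 a * Real.exp (-η * ∑ i ∈ Finset.range 0, q i a) / 1
      simp
    | succ j ih =>
      intro hj a
      have ihj := ih (Nat.lt_of_succ_lt hj)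
      rw [hrec j hj a]
      have hZ : ∑ b, p j b * Real.exp (-η * q j b) = W (j+1) / W j := by
        rw [Finset.sum_congr rfl fun b _ => by rw [ihj b, div_mul_eq_mul_div],
          ← Finset.sum_div]
        congr 1
        exact Finset.sum_congr rfl fun b _ => hwsucc j b
      rw [hZ, ihj a, div_mul_eq_mul_div, hwsucc j a]
      have h1 := (hWpos j).ne'
      have h2 := (hWpos (j+1)).ne'
      field_simp
  have hppos : ∀ j, j < L → ∀ a, 0 < p j a := fun j hj a => by
    rw [closed j hj a]; exact div_pos (hwpos j a) (hWpos j)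
  have hpsum : ∀ j, j < L → ∑ a, p j a = 1 := fun j hj => by
    rw [Finset.sum_congr rfl fun a _ => closed j hj a, ← Finset.sum_div]
    exact div_self (hWpos j).ne'
  -- per-step bound
  have step : ∀ j, j < L → Real.log (W (j+1)) - Real.log (W j) ≤
      -η * (∑ a, p j a * q j a) + η ^ 2 * M ^ 2 / 2 := by
    intro j hj
    have hWj1 : W (j+1) = W j * ∑ a, p j a * Real.exp (-η * q j a) := by
      rw [Finset.mul_sum]
      refine Finset.sum_congr rfl fun a _ => ?_
      rw [closed j hj a, ← mul_assoc, mul_comm (W j) (w j a / W j),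
        div_mul_cancel₀ _ (hWpos j).ne', hwsucc j a]
    have hZp : (0:ℝ) < ∑ a, p j a * Real.exp (-η * q j a) :=
      Finset.sum_pos (fun a _ => mul_pos (hppos j hj a) (Real.exp_pos _)) univ_nonempty
    rw [hWj1, Real.log_mul (hWpos j).ne' hZp.ne', add_sub_cancel_left,
      Real.log_le_iff_le_exp hZp]
    calc ∑ a, p j a * Real.exp (-η * q j a)
        ≤ ∑ a, p j a * (1 - η * q j a + (η * q j a) ^ 2 / 2) := by
          refine Finset.sum_le_sum fun a _ => ?_
          refine mul_le_mul_of_nonneg_left ?_ (hppos j hj a).le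
          have := exp_neg_le_quad (x := η * q j a) (mul_nonneg hη.le (hq0 j hj a))
          rw [neg_mul]
          exact this
      _ = 1 - η * (∑ a, p j a * q j a) + (η^2/2) * ∑ a, p j a * q j a ^ 2 := by
          simp only [mul_sub, mul_add, Finset.sum_add_distrib, Finset.sum_sub_distrib,
            Finset.mul_sum]
          rw [← Finset.sum_mul, hpsum j hj]
          congr 1
          · congr 1
            · rw [one_mul]
            · refine Finset.sum_congr rfl fun a _ => by ring
          · refine Finset.sum_congr rfl fun a _ => by ring
      _ ≤ 1 + (-η * (∑ a, p j a * q j a) + η ^ 2 * M ^ 2 / 2) := by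
          have hq2 : ∑ a, p j a * q j a ^ 2 ≤ M ^ 2 := by
            calc ∑ a, p j a * q j a ^ 2 ≤ ∑ a, p j a * M ^ 2 := by
                  refine Finset.sum_le_sum fun a _ => ?_
                  exact mul_le_mul_of_nonneg_left
                    (pow_le_pow_left₀ (hq0 j hj a) (hqM j hj a) 2) (hppos j hj a).le
              _ = M ^ 2 := by rw [← Finset.sum_mul, hpsum j hj, one_mul]
          have : (η^2/2) * ∑ a, p j a * q j a ^ 2 ≤ η ^ 2 * M ^ 2 / 2 := by
            rw [show η ^ 2 * M ^ 2 / 2 = (η^2/2) * M ^ 2 from by ring]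
            exact mul_le_mul_of_nonneg_left hq2 (by positivity)
          linarith
      _ ≤ Real.exp (-η * (∑ a, p j a * q j a) + η ^ 2 * M ^ 2 / 2) := by
          have := Real.add_one_le_exp (-η * (∑ a, p j a * q j a) + η ^ 2 * M ^ 2 / 2)
          linarith
  -- telescoping and lower bound
  have htel : ∑ j ∈ Finset.range L, (Real.log (W (j+1)) - Real.log (W j))
      = Real.log (W L) := by
    rw [Finset.sum_range_sub (fun j => Real.log (W j)), hW0, Real.log_one, sub_zero]
  have hlower : ∀ a, -Real.log (Fintype.card A) - η * ∑ i ∈ Finset.range L, q i a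
      ≤ Real.log (W L) := by
    intro a
    have h1 : w L a ≤ W L :=
      Finset.single_le_sum (f := fun b => w L b) (fun b _ => (hwpos L b).le) (Finset.mem_univ a)
    have h2 : Real.log (w L a) ≤ Real.log (W L) := Real.log_le_log (hwpos L a) h1
    have h3 : Real.log (w L a)
        = -Real.log (Fintype.card A) - η * ∑ i ∈ Finset.range L, q i a := by
      show Real.log (p 0 a * Real.exp (-η * ∑ i ∈ Finset.range L, q i a)) = _
      rw [Real.log_mul (hp0pos a).ne' (Real.exp_pos _).ne', Real.log_exp, hp0 a,
        one_div, Real.log_inv]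
      ring
    rw [h3] at h2
    exact h2
  -- combine
  have key : ∀ a, ∑ j ∈ Finset.range L, (∑ b, p j b * q j b) - ∑ j ∈ Finset.range L, q j a
      ≤ Real.log (Fintype.card A) / η + η * L * M ^ 2 / 2 := by
    intro a
    have hub : Real.log (W L) ≤ -η * ∑ j ∈ Finset.range L, (∑ b, p j b * q j b)
        + L * (η ^ 2 * M ^ 2 / 2) := by
      rw [← htel]
      calc ∑ j ∈ Finset.range L, (Real.log (W (j+1)) - Real.log (W j))
          ≤ ∑ j ∈ Finset.range L, (-η * (∑ b, p j b * q j b) + η ^ 2 * M ^ 2 / 2) :=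
            Finset.sum_le_sum fun j hj => step j (Finset.mem_range.mp hj)
        _ = -η * ∑ j ∈ Finset.range L, (∑ b, p j b * q j b) + L * (η ^ 2 * M ^ 2 / 2) := by
            rw [Finset.sum_add_distrib, Finset.mul_sum, Finset.sum_const, Finset.card_range,
              nsmul_eq_mul]
    have hcomb := le_trans (hlower a) hub
    have hdiv : η * (∑ j ∈ Finset.range L, (∑ b, p j b * q j b)
        - ∑ j ∈ Finset.range L, q j a)
        ≤ Real.log (Fintype.card A) + η ^ 2 * ((L:ℝ) * M ^ 2) / 2 := by nlinarith
    rw [← mul_le_mul_iff_right₀ hη]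
    calc η * (∑ j ∈ Finset.range L, (∑ b, p j b * q j b) - ∑ j ∈ Finset.range L, q j a)
        ≤ Real.log (Fintype.card A) + η ^ 2 * ((L:ℝ) * M ^ 2) / 2 := hdiv
      _ = η * (Real.log (Fintype.card A) / η + η * L * M ^ 2 / 2) := by
          field_simp
  -- comparator
  have e1 : ∑ j ∈ Finset.range L, ∑ a, (p j a - ρ a) * q j a
      = ∑ a, ρ a * (∑ j ∈ Finset.range L, (∑ b, p j b * q j b)
          - ∑ j ∈ Finset.range L, q j a) := by
    have swap : ∑ j ∈ Finset.range L, ∑ a, ρ a * q j a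
        = ∑ a, ρ a * ∑ j ∈ Finset.range L, q j a := by
      rw [Finset.sum_comm]
      exact Finset.sum_congr rfl fun a _ => (Finset.mul_sum _ _ _).symm
    calc ∑ j ∈ Finset.range L, ∑ a, (p j a - ρ a) * q j a
        = ∑ j ∈ Finset.range L, ((∑ b, p j b * q j b) - ∑ a, ρ a * q j a) := by
          refine Finset.sum_congr rfl fun j _ => ?_
          rw [← Finset.sum_sub_distrib]
          exact Finset.sum_congr rfl fun a _ => by ring
      _ = (∑ j ∈ Finset.range L, ∑ b, p j b * q j b)
            - ∑ a, ρ a * ∑ j ∈ Finset.range L, q j a := by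
          rw [Finset.sum_sub_distrib, swap]
      _ = ∑ a, ρ a * (∑ j ∈ Finset.range L, (∑ b, p j b * q j b)
            - ∑ j ∈ Finset.range L, q j a) := by
          simp only [mul_sub]
          rw [Finset.sum_sub_distrib, ← Finset.sum_mul, hρ1, one_mul]
  rw [e1]
  calc ∑ a, ρ a * (∑ j ∈ Finset.range L, (∑ b, p j b * q j b)
          - ∑ j ∈ Finset.range L, q j a)
      ≤ ∑ a, ρ a * (Real.log (Fintype.card A) / η + η * L * M ^ 2 / 2) :=
        Finset.sum_le_sum fun a _ => mul_le_mul_of_nonneg_left (key a) (hρ0 a)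
    _ = Real.log (Fintype.card A) / η + η * L * M ^ 2 / 2 := by
        rw [← Finset.sum_mul, hρ1, one_mul]

end Hedge


/-- Deterministic version of the paper's Lemma 4.1 (OMD regret term): `K = N·L`
episodes are split into `N` epochs of length `L`; inside each epoch the model
`P̂_i` is fixed, the policy is restarted at uniform at each epoch start and
updated by entropy-regularized online mirror descent with
`η = (1−γ)·√(ln A/(2L))`; then for every comparator policy `π*` and state `s₀`,
`Σ_k (V_{P̂_{i(k)},c_k}^{π̃_k}(s₀) − V_{P̂_{i(k)},c_k}^{π*}(s₀))
  ≤ 2K√(2 ln A)/(√L·(1−γ)²)`.  Episodes are 0-indexed: episode `k` belongs to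
epoch `k / L`, and epoch starts are the episodes divisible by `L`. -/
theorem stmt_1 {S A : Type*} [Fintype S] [Fintype A] [DecidableEq S]
    (γ : ℝ) (hγ : γ ∈ Set.Ico (0 : ℝ) 1)
    (N L K : ℕ) (hN : 1 ≤ N) (hL : 1 ≤ L) (hK : K = N * L)
    (Phat : ℕ → S → A → S → ℝ)
    (hPhat0 : ∀ i < N, ∀ s a s', 0 ≤ Phat i s a s')
    (hPhat1 : ∀ i < N, ∀ s a, ∑ s', Phat i s a s' = 1)
    (c : ℕ → S → A → ℝ) (hc : ∀ k < K, ∀ s a, c k s a ∈ Set.Icc (0 : ℝ) 2)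
    (η : ℝ) (hη : η = (1 - γ) * Real.sqrt (Real.log (Fintype.card A) / (2 * L)))
    (πt : ℕ → S → A → ℝ)
    (hstart : ∀ k < K, L ∣ k → ∀ s a, πt k s a = 1 / (Fintype.card A : ℝ))
    (hupd : ∀ k, k + 1 < K → ¬ (L ∣ (k + 1)) → ∀ s a,
      πt (k + 1) s a = πt k s a *
          Real.exp (-η * qvalue γ (Phat (k / L)) (c k) (πt k) s a) /
        ∑ b, πt k s b * Real.exp (-η * qvalue γ (Phat (k / L)) (c k) (πt k) s b))
    (πstar : S → A → ℝ) (hπs0 : ∀ s a, 0 ≤ πstar s a)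
    (hπs1 : ∀ s, ∑ a, πstar s a = 1) (s₀ : S) :
    ∑ k ∈ Finset.range K,
        (value γ (Phat (k / L)) (c k) (πt k) s₀ -
          value γ (Phat (k / L)) (c k) πstar s₀) ≤
      2 * K * Real.sqrt (2 * Real.log (Fintype.card A)) /
        (Real.sqrt L * (1 - γ) ^ 2) := by
  obtain ⟨hγ0, hγ1⟩ := hγ
  have h1γ : 0 < 1 - γ := by linarith
  have hneA : Nonempty A := by
    by_contra hemp
    rw [not_nonempty_iff] at hemp
    have := hπs1 s₀
    rw [Finset.univ_eq_empty, Finset.sum_empty] at this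
    norm_num at this
  have hcard1 : (1:ℕ) ≤ Fintype.card A := Fintype.card_pos
  have hcardR : (0:ℝ) < Fintype.card A := by exact_mod_cast Fintype.card_pos (α := A)
  have hLpos : (0:ℝ) < L := by exact_mod_cast hL
  -- policy properties
  have hpol : ∀ k, k < K → (∀ s a, 0 < πt k s a) ∧ (∀ s, ∑ a, πt k s a = 1) := by
    intro k
    induction k using Nat.strong_induction_on with
    | _ k ih =>
      intro hk
      by_cases hdvd : L ∣ k
      · refine ⟨fun s a => ?_, fun s => ?_⟩
        · rw [hstart k hk hdvd s a]; positivity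
        · rw [Finset.sum_congr rfl fun a _ => hstart k hk hdvd s a, Finset.sum_const,
            Finset.card_univ, nsmul_eq_mul]
          field_simp
      · have hk0 : k ≠ 0 := fun h => hdvd (h ▸ dvd_zero L)
        obtain ⟨m, rfl⟩ : ∃ m, k = m + 1 := ⟨k - 1, by omega⟩
        have hm := ih m (by omega) (by omega)
        have hupd' := hupd m hk hdvd
        have hZ : ∀ s, 0 < ∑ b, πt m s b *
            Real.exp (-η * qvalue γ (Phat (m / L)) (c m) (πt m) s b) :=
          fun s => Finset.sum_pos (fun b _ => mul_pos (hm.1 s b) (Real.exp_pos _))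
            univ_nonempty
        refine ⟨fun s a => ?_, fun s => ?_⟩
        · rw [hupd' s a]
          exact div_pos (mul_pos (hm.1 s a) (Real.exp_pos _)) (hZ s)
        · rw [Finset.sum_congr rfl fun a _ => hupd' s a, ← Finset.sum_div]
          exact div_self (hZ s).ne'
  by_cases hA1 : Fintype.card A = 1
  · -- degenerate case
    haveI hsub : Subsingleton A := Fintype.card_le_one_iff_subsingleton.mp (le_of_eq hA1)
    have hone : ∀ (f : A → ℝ) (a : A), (∑ b, f b) = f a := by
      intro f a
      rw [show (Finset.univ : Finset A) = {a} from Finset.eq_singleton_iff_unique_mem.mpr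
        ⟨Finset.mem_univ a, fun b _ => Subsingleton.elim b a⟩, Finset.sum_singleton]
    have hstar1 : ∀ s a, πstar s a = 1 := fun s a => by
      have := hπs1 s; rwa [hone _ a] at this
    have hpt1 : ∀ k, k < K → ∀ s a, πt k s a = 1 := by
      intro k
      induction k using Nat.strong_induction_on with
      | _ k ih =>
        intro hk s a
        by_cases hdvd : L ∣ k
        · rw [hstart k hk hdvd s a, hA1]; norm_num
        · have hk0 : k ≠ 0 := fun h => hdvd (h ▸ dvd_zero L)
          obtain ⟨m, rfl⟩ : ∃ m, k = m + 1 := ⟨k - 1, by omega⟩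
          have hm1 : πt m s a = 1 := ih m (by omega) (by omega) s a
          rw [hupd m hk hdvd s a, hone _ a, hm1, one_mul]
          exact div_self (Real.exp_pos _).ne'
    have hzero : ∀ k ∈ Finset.range K,
        value γ (Phat (k / L)) (c k) (πt k) s₀ -
          value γ (Phat (k / L)) (c k) πstar s₀ = 0 := by
      intro k hk
      rw [Finset.mem_range] at hk
      have : πt k = πstar := funext fun s => funext fun a => by
        rw [hpt1 k hk s a, hstar1 s a]
      rw [this, sub_self]
    rw [Finset.sum_congr rfl hzero, Finset.sum_const, smul_zero, hA1]
    simp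
  -- main case
  have hA2 : 2 ≤ Fintype.card A := by omega
  set lg := Real.log (Fintype.card A) with hlgdef
  have hlgpos : 0 < lg := Real.log_pos (by exact_mod_cast hA2)
  set t := Real.sqrt (lg / (2 * L)) with ht
  have htpos : 0 < t := Real.sqrt_pos.mpr (by positivity)
  have ht2 : t ^ 2 = lg / (2 * L) := Real.sq_sqrt (by positivity)
  have hlg : lg = 2 * L * t ^ 2 := by rw [ht2]; field_simp
  have hηt : η = (1 - γ) * t := hη
  have hηpos : 0 < η := by rw [hηt]; exact mul_pos h1γ htpos
  set M : ℝ := 2 / (1 - γ) with hM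
  have hM0 : 0 ≤ M := by positivity
  set R : ℝ := lg / η + η * L * M ^ 2 / 2 with hR
  -- per-epoch bound
  have epoch : ∀ i, i < N → ∑ j ∈ Finset.range L,
      (value γ (Phat i) (c (i*L+j)) (πt (i*L+j)) s₀
        - value γ (Phat i) (c (i*L+j)) πstar s₀) ≤ (1 - γ)⁻¹ * R := by
    intro i hi
    have hkK : ∀ j, j < L → i*L+j < K := by
      intro j hj
      rw [hK]
      calc i*L+j < i*L+L := by omega
        _ = (i+1)*L := by ring
        _ ≤ N*L := Nat.mul_le_mul_right L (by omega)
    have hdivL : ∀ j, j < L → (i*L+j)/L = i := by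
      intro j hj
      rw [show i*L+j = j + L*i from by ring,
        Nat.add_mul_div_left j i (by omega), Nat.div_eq_of_lt hj, zero_add]
    have hok : ∀ j, j < L → MDPOk γ (Phat i) (πt (i*L+j)) (c (i*L+j)) 2 := by
      intro j hj
      exact ⟨hγ0, hγ1, hPhat0 i hi, hPhat1 i hi,
        fun s a => ((hpol _ (hkK j hj)).1 s a).le, (hpol _ (hkK j hj)).2,
        fun s a => (hc _ (hkK j hj) s a).1, fun s a => (hc _ (hkK j hj) s a).2⟩
    have hokstar : ∀ j, j < L → MDPOk γ (Phat i) πstar (c (i*L+j)) 2 := by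
      intro j hj
      exact ⟨hγ0, hγ1, hPhat0 i hi, hPhat1 i hi, hπs0, hπs1,
        fun s a => (hc _ (hkK j hj) s a).1, fun s a => (hc _ (hkK j hj) s a).2⟩
    have hpdl : ∀ j ∈ Finset.range L, HasSum
        (fun τ => γ ^ τ * ∑ s, stateDist (Phat i) πstar s₀ τ s *
          ∑ a, (πt (i*L+j) s a - πstar s a) *
            qvalue γ (Phat i) (c (i*L+j)) (πt (i*L+j)) s a)
        (value γ (Phat i) (c (i*L+j)) (πt (i*L+j)) s₀
          - value γ (Phat i) (c (i*L+j)) πstar s₀) := by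
      intro j hj
      exact pdl (hok j (Finset.mem_range.mp hj)) (hokstar j (Finset.mem_range.mp hj))
        (by norm_num) s₀
    have hsum := hasSum_sum hpdl
    -- hedge per state
    have hh : ∀ s, ∑ j ∈ Finset.range L, ∑ a, (πt (i*L+j) s a - πstar s a) *
        qvalue γ (Phat i) (c (i*L+j)) (πt (i*L+j)) s a ≤ R := by
      intro s
      have := hedge (A := A) (fun j a => πt (i*L+j) s a)
        (fun j a => qvalue γ (Phat i) (c (i*L+j)) (πt (i*L+j)) s a) L η M hηpos hM0
        ?_ ?_ ?_ ?_ (fun a => πstar s a) (hπs0 s) (hπs1 s)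
      · rw [hR, hlgdef]
        exact this
      · intro a
        have h0L : i*L+0 < K := hkK 0 (by omega)
        have := hstart (i*L) (by simpa using h0L) ⟨i, mul_comm i L⟩ s a
        simpa using this
      · intro j hj a
        have hj' : j < L := by omega
        have hne : ¬ (L ∣ (i*L+j+1)) := by
          intro hdvd
          have h1 : L ∣ (j+1) := by
            have := (Nat.dvd_add_right (Dvd.intro i (mul_comm L i))).mp
              (by rwa [show i*L+j+1 = i*L+(j+1) from rfl] at hdvd)
            exact this
          have := Nat.le_of_dvd (by omega) h1
          omega
        have := hupd (i*L+j) (by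
          have := hkK (j+1) hj
          omega) hne s a
        rw [hdivL j hj'] at this
        exact this
      · intro j hj a
        exact qvalue_nonneg (hok j hj) (by norm_num) s a
      · intro j hj a
        have := qvalue_le (hok j hj) (by norm_num) s a
        rw [hM]
        exact this
    -- combine
    have hFle : ∀ τ, (∑ j ∈ Finset.range L, γ ^ τ * ∑ s, stateDist (Phat i) πstar s₀ τ s *
        ∑ a, (πt (i*L+j) s a - πstar s a) *
          qvalue γ (Phat i) (c (i*L+j)) (πt (i*L+j)) s a) ≤ γ ^ τ * R := by
      intro τ
      have hswap : ∑ j ∈ Finset.range L, γ ^ τ * ∑ s, stateDist (Phat i) πstar s₀ τ s *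
          ∑ a, (πt (i*L+j) s a - πstar s a) *
            qvalue γ (Phat i) (c (i*L+j)) (πt (i*L+j)) s a
          = γ ^ τ * ∑ s, stateDist (Phat i) πstar s₀ τ s *
              ∑ j ∈ Finset.range L, ∑ a, (πt (i*L+j) s a - πstar s a) *
                qvalue γ (Phat i) (c (i*L+j)) (πt (i*L+j)) s a := by
        rw [← Finset.mul_sum, Finset.sum_comm]
        congr 1
        refine Finset.sum_congr rfl fun s _ => ?_
        rw [Finset.mul_sum]
      rw [hswap]
      refine mul_le_mul_of_nonneg_left ?_ (pow_nonneg hγ0 τ)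
      calc ∑ s, stateDist (Phat i) πstar s₀ τ s *
            ∑ j ∈ Finset.range L, ∑ a, (πt (i*L+j) s a - πstar s a) *
              qvalue γ (Phat i) (c (i*L+j)) (πt (i*L+j)) s a
          ≤ ∑ s, stateDist (Phat i) πstar s₀ τ s * R :=
            Finset.sum_le_sum fun s _ => mul_le_mul_of_nonneg_left (hh s)
              (sd_nonneg (hPhat0 i hi) hπs0 s₀ τ s)
        _ = R := by rw [← Finset.sum_mul, sd_sum (hPhat1 i hi) hπs1, one_mul]
    have hgeo : HasSum (fun τ : ℕ => γ ^ τ * R) ((1 - γ)⁻¹ * R) :=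
      (hasSum_geometric_of_lt_one hγ0 hγ1).mul_right R
    exact hasSum_le hFle hsum hgeo
  -- split the range
  have split : ∀ n : ℕ, ∑ k ∈ Finset.range (n*L),
      (value γ (Phat (k / L)) (c k) (πt k) s₀ - value γ (Phat (k / L)) (c k) πstar s₀)
      = ∑ i ∈ Finset.range n, ∑ j ∈ Finset.range L,
        (value γ (Phat ((i*L+j) / L)) (c (i*L+j)) (πt (i*L+j)) s₀
          - value γ (Phat ((i*L+j) / L)) (c (i*L+j)) πstar s₀) := by
    intro n
    induction n with
    | zero => simp
    | succ n ihn =>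
      rw [show (n+1)*L = n*L + L from by ring, Finset.sum_range_add, ihn,
        Finset.sum_range_succ]
  have total : ∑ k ∈ Finset.range K,
      (value γ (Phat (k / L)) (c k) (πt k) s₀ - value γ (Phat (k / L)) (c k) πstar s₀)
      ≤ N * ((1 - γ)⁻¹ * R) := by
    rw [hK, split N]
    calc ∑ i ∈ Finset.range N, ∑ j ∈ Finset.range L,
          (value γ (Phat ((i*L+j) / L)) (c (i*L+j)) (πt (i*L+j)) s₀
            - value γ (Phat ((i*L+j) / L)) (c (i*L+j)) πstar s₀)
        ≤ ∑ i ∈ Finset.range N, (1 - γ)⁻¹ * R := by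
          refine Finset.sum_le_sum fun i hi => ?_
          have hiN := Finset.mem_range.mp hi
          have hdivL : ∀ j, j < L → (i*L+j)/L = i := by
            intro j hj
            rw [show i*L+j = j + L*i from by ring,
              Nat.add_mul_div_left j i (by omega), Nat.div_eq_of_lt hj, zero_add]
          have := epoch i hiN
          rw [Finset.sum_congr rfl fun j hj => by
            rw [hdivL j (Finset.mem_range.mp hj)]]
          exact this
      _ = N * ((1 - γ)⁻¹ * R) := by
          rw [Finset.sum_const, Finset.card_range, nsmul_eq_mul]
  refine le_trans total ?_
  -- final arithmetic
  have hsL : Real.sqrt L * Real.sqrt L = (L:ℝ) := Real.mul_self_sqrt hLpos.le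
  have hsLpos : 0 < Real.sqrt L := Real.sqrt_pos.mpr hLpos
  have hsqrt2lg : Real.sqrt (2 * lg) = 2 * Real.sqrt L * t := by
    rw [show 2 * lg = (2 * Real.sqrt L * t)^2 from by
      rw [show (2 * Real.sqrt L * t)^2 = 4 * (Real.sqrt L * Real.sqrt L) * t^2 from by ring,
        hsL, hlg]; ring]
    exact Real.sqrt_sq (by positivity)
  have hKcast : (K:ℝ) = (N:ℝ) * (L:ℝ) := by rw [hK]; push_cast; ring
  have hRval : R = 4 * L * t / (1 - γ) := by
    rw [hR, hηt, hM, hlg]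
    field_simp
    ring
  rw [hRval, hsqrt2lg, hKcast]
  have heq : (N:ℝ) * ((1 - γ)⁻¹ * (4 * L * t / (1 - γ)))
      = 2 * ((N:ℝ) * L) * (2 * Real.sqrt L * t) / (Real.sqrt L * (1 - γ) ^ 2) := by
    rw [eq_div_iff (by positivity)]
    field_simp
    ring
  exact heq.le
end
end

section
/- One-step-back inequality in the true model: for any g : S×𝒜 → ℝ with ‖g‖_∞ ≤ B, γ ∈ (0,1), and any policy π, it holds that Σ_{s̃,ã} d_{P*}^{π}(s̃,ã) · Σ_{s} P*(s|s̃,ã) Σ_{a} π(a|s) g(s,a) ≤ ( Σ_{s̃,ã} d_{P*}^{π}(s̃,ã) · ‖φ*(s̃,ã)‖_{Σ_{ρ,φ*}^{-1}} ) · √( (kA/(ξγ)) · Σ_s ρ(s) Σ_a π̄(a|s) g(s,a)² + λ·d·B² ), where Σ_{ρ,φ*} = k·Σ_{s,a} ρ(s,a)·φ*(s,a)φ*(s,a)ᵀ + λ·I_d is formed from the joint averaged occupancy ρ(s,a). -/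
open Finset

noncomputable section

/-- Discounted value from the initial distribution `d₀`:
`V_{P,ℓ}^π = Σ_{s₀} d₀(s₀) V_{P,ℓ}^π(s₀)`. -/
def valueInit {S A : Type*} [Fintype S] [Fintype A] [DecidableEq S] (γ : ℝ)
    (d0 : S → ℝ) (P : S → A → S → ℝ) (ℓ : S → A → ℝ) (π : S → A → ℝ) : ℝ :=
  ∑ s0, d0 s0 * value γ P ℓ π s0

/-- Step-`h` occupancy: `d_{P,0}^π(s,a) = d₀(s)π(a|s)` and
`d_{P,h+1}^π(s,a) = Σ_{s',a'} d_{P,h}^π(s',a') P(s|s',a') π(a|s)`. -/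
def occ {S A : Type*} [Fintype S] [Fintype A] (d0 : S → ℝ)
    (P : S → A → S → ℝ) (π : S → A → ℝ) : ℕ → S → A → ℝ
  | 0 => fun s a => d0 s * π s a
  | h + 1 => fun s a => (∑ s', ∑ a', occ d0 P π h s' a' * P s' a' s) * π s a

/-- Discounted occupancy `d_P^π(s,a) = (1−γ) Σ_{h=0}^∞ γ^h d_{P,h}^π(s,a)`. -/
def docc {S A : Type*} [Fintype S] [Fintype A] (γ : ℝ) (d0 : S → ℝ)
    (P : S → A → S → ℝ) (π : S → A → ℝ) (s : S) (a : A) : ℝ :=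
  (1 - γ) * ∑' h : ℕ, γ ^ h * occ d0 P π h s a

open Matrix


namespace Stmt7Aux

variable {S A : Type*} [Fintype S] [Fintype A]
variable {γ : ℝ} {d0 : S → ℝ} {P : S → A → S → ℝ} {π : S → A → ℝ}

lemma occ_nonneg (hd0 : ∀ s, 0 ≤ d0 s) (hP : ∀ s a s', 0 ≤ P s a s')
    (hπ : ∀ s a, 0 ≤ π s a) : ∀ h s a, 0 ≤ occ d0 P π h s a := by
  intro h
  induction h with
  | zero => intro s a; simp only [occ]; exact mul_nonneg (hd0 s) (hπ s a)
  | succ n ih =>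
    intro s a; simp only [occ]
    exact mul_nonneg (Finset.sum_nonneg fun s' _ => Finset.sum_nonneg fun a' _ =>
      mul_nonneg (ih s' a') (hP s' a' s)) (hπ s a)

lemma occ_total (hd01 : ∑ s, d0 s = 1) (hP1 : ∀ s a, ∑ s', P s a s' = 1)
    (hπ1 : ∀ s, ∑ a, π s a = 1) : ∀ h, ∑ s, ∑ a, occ d0 P π h s a = 1 := by
  intro h
  induction h with
  | zero =>
    simp only [occ]
    calc ∑ s, ∑ a, d0 s * π s a = ∑ s, d0 s * ∑ a, π s a := by
          exact Finset.sum_congr rfl fun s _ => (Finset.mul_sum _ _ _).symm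
      _ = 1 := by simp [hπ1, hd01]
  | succ n ih =>
    simp only [occ]
    calc ∑ s, ∑ a, (∑ s', ∑ a', occ d0 P π n s' a' * P s' a' s) * π s a
        = ∑ s, (∑ s', ∑ a', occ d0 P π n s' a' * P s' a' s) * ∑ a, π s a := by
          exact Finset.sum_congr rfl fun s _ => (Finset.mul_sum _ _ _).symm
      _ = ∑ s, ∑ s', ∑ a', occ d0 P π n s' a' * P s' a' s := by simp [hπ1]
      _ = ∑ s', ∑ a', ∑ s, occ d0 P π n s' a' * P s' a' s := by
          rw [Finset.sum_comm]
          exact Finset.sum_congr rfl fun s' _ => Finset.sum_comm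
      _ = ∑ s', ∑ a', occ d0 P π n s' a' := by
          refine Finset.sum_congr rfl fun s' _ => Finset.sum_congr rfl fun a' _ => ?_
          rw [← Finset.mul_sum, hP1, mul_one]
      _ = 1 := ih

lemma occ_le_one (hd0 : ∀ s, 0 ≤ d0 s) (hd01 : ∑ s, d0 s = 1)
    (hP : ∀ s a s', 0 ≤ P s a s') (hP1 : ∀ s a, ∑ s', P s a s' = 1)
    (hπ : ∀ s a, 0 ≤ π s a) (hπ1 : ∀ s, ∑ a, π s a = 1)
    (h : ℕ) (s : S) (a : A) : occ d0 P π h s a ≤ 1 := by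
  have h1 := occ_total hd01 hP1 hπ1 (π := π) h
  calc occ d0 P π h s a ≤ ∑ a, occ d0 P π h s a :=
        Finset.single_le_sum (fun a' _ => occ_nonneg hd0 hP hπ h s a') (mem_univ a)
    _ ≤ ∑ s, ∑ a, occ d0 P π h s a :=
        Finset.single_le_sum (fun s' _ => Finset.sum_nonneg fun a' _ =>
          occ_nonneg hd0 hP hπ h s' a') (mem_univ s)
    _ = 1 := h1

lemma summable_occ (hγ0 : 0 ≤ γ) (hγ1 : γ < 1)
    (hd0 : ∀ s, 0 ≤ d0 s) (hd01 : ∑ s, d0 s = 1)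
    (hP : ∀ s a s', 0 ≤ P s a s') (hP1 : ∀ s a, ∑ s', P s a s' = 1)
    (hπ : ∀ s a, 0 ≤ π s a) (hπ1 : ∀ s, ∑ a, π s a = 1) (s : S) (a : A) :
    Summable (fun h => γ ^ h * occ d0 P π h s a) := by
  refine Summable.of_nonneg_of_le
    (fun h => mul_nonneg (pow_nonneg hγ0 _) (occ_nonneg hd0 hP hπ h s a))
    (fun h => ?_) (summable_geometric_of_lt_one hγ0 hγ1)
  calc γ ^ h * occ d0 P π h s a ≤ γ ^ h * 1 := by
        exact mul_le_mul_of_nonneg_left (occ_le_one hd0 hd01 hP hP1 hπ hπ1 h s a)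
          (pow_nonneg hγ0 _)
    _ = γ ^ h := mul_one _

lemma docc_nonneg (hγ1 : γ ≤ 1) (hγ0 : 0 ≤ γ)
    (hd0 : ∀ s, 0 ≤ d0 s) (hP : ∀ s a s', 0 ≤ P s a s')
    (hπ : ∀ s a, 0 ≤ π s a) (s : S) (a : A) : 0 ≤ docc γ d0 P π s a :=
  mul_nonneg (by linarith) (tsum_nonneg fun h =>
    mul_nonneg (pow_nonneg hγ0 _) (occ_nonneg hd0 hP hπ h s a))

lemma occ_step (hπ1 : ∀ s, ∑ a, π s a = 1) (h : ℕ) (s' : S) :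
    ∑ a, occ d0 P π (h + 1) s' a = ∑ s, ∑ a, occ d0 P π h s a * P s a s' := by
  simp only [occ]
  rw [← Finset.mul_sum, hπ1, mul_one]

lemma docc_flow (hγ0 : 0 < γ) (hγ1 : γ < 1)
    (hd0 : ∀ s, 0 ≤ d0 s) (hd01 : ∑ s, d0 s = 1)
    (hP : ∀ s a s', 0 ≤ P s a s') (hP1 : ∀ s a, ∑ s', P s a s' = 1)
    (hπ : ∀ s a, 0 ≤ π s a) (hπ1 : ∀ s, ∑ a, π s a = 1) (s' : S) :
    γ * ∑ s, ∑ a, docc γ d0 P π s a * P s a s' ≤ ∑ a, docc γ d0 P π s' a := by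
  have hsumm : ∀ s a, Summable (fun h => γ ^ h * occ d0 P π h s a) :=
    fun s a => summable_occ hγ0.le hγ1 hd0 hd01 hP hP1 hπ hπ1 s a
  set u : ℕ → ℝ := fun h => γ ^ h * ∑ a, occ d0 P π h s' a with hu
  have hun : ∀ h, 0 ≤ u h := fun h => mul_nonneg (pow_nonneg hγ0.le _)
    (Finset.sum_nonneg fun a _ => occ_nonneg hd0 hP hπ h s' a)
  have huseq : u = fun h => ∑ a, γ ^ h * occ d0 P π h s' a := by
    funext h; rw [hu]; exact Finset.mul_sum _ _ _
  have hus : Summable u := by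
    rw [huseq]; exact summable_sum fun a _ => hsumm s' a
  -- rewrite LHS
  have hL : ∑ s, ∑ a, docc γ d0 P π s a * P s a s' =
      (1 - γ) * ∑' h : ℕ, γ ^ h * ∑ s, ∑ a, occ d0 P π h s a * P s a s' := by
    simp only [docc]
    calc ∑ s, ∑ a, ((1 - γ) * ∑' h : ℕ, γ ^ h * occ d0 P π h s a) * P s a s'
        = ∑ s, ∑ a, (1 - γ) * ∑' h : ℕ, (γ ^ h * occ d0 P π h s a) * P s a s' := by
          refine Finset.sum_congr rfl fun s _ => Finset.sum_congr rfl fun a _ => ?_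
          rw [mul_assoc, tsum_mul_right]
      _ = (1 - γ) * ∑ s, ∑ a, ∑' h : ℕ, (γ ^ h * occ d0 P π h s a) * P s a s' := by
          rw [Finset.mul_sum]
          exact Finset.sum_congr rfl fun s _ => (Finset.mul_sum _ _ _).symm
      _ = (1 - γ) * ∑' h : ℕ, ∑ s, ∑ a, (γ ^ h * occ d0 P π h s a) * P s a s' := by
          congr 1
          rw [eq_comm, Summable.tsum_finsetSum (fun s _ => summable_sum fun a _ => (hsumm s a).mul_right _)]
          exact Finset.sum_congr rfl fun s _ =>
            Summable.tsum_finsetSum fun a _ => (hsumm s a).mul_right _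
      _ = (1 - γ) * ∑' h : ℕ, γ ^ h * ∑ s, ∑ a, occ d0 P π h s a * P s a s' := by
          congr 1
          refine tsum_congr fun h => ?_
          rw [Finset.mul_sum]
          exact Finset.sum_congr rfl fun s _ => by
            rw [Finset.mul_sum]
            exact Finset.sum_congr rfl fun a _ => by ring
  have hR : ∑ a, docc γ d0 P π s' a = (1 - γ) * ∑' h, u h := by
    simp only [docc]
    rw [← Finset.mul_sum, huseq]
    congr 1
    exact (Summable.tsum_finsetSum fun a _ => hsumm s' a).symm
  rw [hL, hR]
  have hne : γ ≠ 0 := hγ0.ne'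
  have hshift : ∀ h : ℕ, γ ^ h * ∑ s, ∑ a, occ d0 P π h s a * P s a s' = u (h + 1) / γ := by
    intro h
    rw [← occ_step hπ1]
    simp only [hu, pow_succ]
    field_simp
  have h1γ : (0:ℝ) ≤ 1 - γ := by linarith
  calc γ * ((1 - γ) * ∑' h : ℕ, γ ^ h * ∑ s, ∑ a, occ d0 P π h s a * P s a s')
      = (1 - γ) * ∑' h : ℕ, u (h + 1) := by
        rw [tsum_congr hshift, tsum_div_const]
        field_simp
    _ ≤ (1 - γ) * ∑' h : ℕ, u h := by
        refine mul_le_mul_of_nonneg_left ?_ h1γ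
        have := Summable.tsum_eq_zero_add hus
        linarith [hun 0]


lemma quad_expand {d : ℕ} (c lam : ℝ) (r : S → A → ℝ) (φ : S → A → Fin d → ℝ)
    (x y : Fin d → ℝ) :
    x ⬝ᵥ ((c • (∑ s, ∑ a, r s a • Matrix.vecMulVec (φ s a) (φ s a)) +
        lam • (1 : Matrix (Fin d) (Fin d) ℝ)) *ᵥ y) =
      c * (∑ s, ∑ a, r s a * ((φ s a ⬝ᵥ x) * (φ s a ⬝ᵥ y))) + lam * (x ⬝ᵥ y) := by
  have hN : ∀ i j, (∑ s, ∑ a, r s a • Matrix.vecMulVec (φ s a) (φ s a)) i j =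
      ∑ s, ∑ a, r s a * (φ s a i * φ s a j) := by
    intro i j
    simp [Matrix.sum_apply, Matrix.vecMulVec_apply]
  rw [Matrix.add_mulVec, Matrix.smul_mulVec, Matrix.smul_mulVec,
    Matrix.one_mulVec, dotProduct_add, dotProduct_smul, dotProduct_smul,
    smul_eq_mul, smul_eq_mul]
  congr 1
  congr 1
  calc x ⬝ᵥ ((∑ s, ∑ a, r s a • Matrix.vecMulVec (φ s a) (φ s a)) *ᵥ y)
      = ∑ i, ∑ j, x i * ((∑ s, ∑ a, r s a * (φ s a i * φ s a j)) * y j) := by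
        simp only [Matrix.mulVec, dotProduct]
        exact Finset.sum_congr rfl fun i _ => by
          rw [Finset.mul_sum]
          exact Finset.sum_congr rfl fun j _ => by rw [hN]
    _ = ∑ i, ∑ j, ∑ s, ∑ a, r s a * ((φ s a i * x i) * (φ s a j * y j)) := by
        refine Finset.sum_congr rfl fun i _ => Finset.sum_congr rfl fun j _ => ?_
        calc x i * ((∑ s, ∑ a, r s a * (φ s a i * φ s a j)) * y j)
            = ∑ s, ∑ a, x i * ((r s a * (φ s a i * φ s a j)) * y j) := by
              rw [Finset.sum_mul, Finset.mul_sum]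
              exact Finset.sum_congr rfl fun s _ => by rw [Finset.sum_mul, Finset.mul_sum]
          _ = ∑ s, ∑ a, r s a * ((φ s a i * x i) * (φ s a j * y j)) :=
              Finset.sum_congr rfl fun s _ => Finset.sum_congr rfl fun a _ => by ring
    _ = ∑ i, ∑ s, ∑ j, ∑ a, r s a * ((φ s a i * x i) * (φ s a j * y j)) :=
        Finset.sum_congr rfl fun i _ => Finset.sum_comm
    _ = ∑ s, ∑ i, ∑ j, ∑ a, r s a * ((φ s a i * x i) * (φ s a j * y j)) :=
        Finset.sum_comm
    _ = ∑ s, ∑ i, ∑ a, ∑ j, r s a * ((φ s a i * x i) * (φ s a j * y j)) :=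
        Finset.sum_congr rfl fun s _ => Finset.sum_congr rfl fun i _ => Finset.sum_comm
    _ = ∑ s, ∑ a, ∑ i, ∑ j, r s a * ((φ s a i * x i) * (φ s a j * y j)) :=
        Finset.sum_congr rfl fun s _ => Finset.sum_comm
    _ = ∑ s, ∑ a, r s a * ((φ s a ⬝ᵥ x) * (φ s a ⬝ᵥ y)) := by
        refine Finset.sum_congr rfl fun s _ => Finset.sum_congr rfl fun a _ => ?_
        rw [dotProduct, dotProduct, Finset.sum_mul_sum, Finset.mul_sum]
        exact Finset.sum_congr rfl fun i _ => by rw [Finset.mul_sum]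

lemma cs_bound {d : ℕ} (M : Matrix (Fin d) (Fin d) ℝ)
    (hsymm : ∀ x y : Fin d → ℝ, x ⬝ᵥ (M *ᵥ y) = y ⬝ᵥ (M *ᵥ x))
    (hpos : ∀ x : Fin d → ℝ, 0 ≤ x ⬝ᵥ (M *ᵥ x))
    (u w : Fin d → ℝ) :
    (u ⬝ᵥ (M *ᵥ w)) ^ 2 ≤ (u ⬝ᵥ (M *ᵥ u)) * (w ⬝ᵥ (M *ᵥ w)) := by
  have key : ∀ t : ℝ, 0 ≤ (w ⬝ᵥ (M *ᵥ w)) * (t * t) +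
      (2 * (u ⬝ᵥ (M *ᵥ w))) * t + (u ⬝ᵥ (M *ᵥ u)) := by
    intro t
    have h := hpos (u + t • w)
    have expand : (u + t • w) ⬝ᵥ (M *ᵥ (u + t • w)) =
        (w ⬝ᵥ (M *ᵥ w)) * (t * t) + (2 * (u ⬝ᵥ (M *ᵥ w))) * t + (u ⬝ᵥ (M *ᵥ u)) := by
      rw [Matrix.mulVec_add, Matrix.mulVec_smul, dotProduct_add, add_dotProduct,
        add_dotProduct, dotProduct_smul, smul_dotProduct, smul_dotProduct,
        dotProduct_smul, hsymm w u]
      simp only [smul_eq_mul]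
      ring
    rw [expand] at h
    exact h
  have hd := discrim_le_zero key
  rw [discrim] at hd
  nlinarith [hd]

end Stmt7Aux

theorem stmt7_core {S A : Type*} [Fintype S] [Fintype A] [DecidableEq S] {d : ℕ}
    (γ : ℝ) (hγ : γ ∈ Set.Ioo (0 : ℝ) 1)
    (d0 : S → ℝ) (hd00 : ∀ s, 0 ≤ d0 s) (hd01 : ∑ s, d0 s = 1)
    (φstar : S → A → Fin d → ℝ) (μstar : S → Fin d → ℝ)
    (Pstar : S → A → S → ℝ)
    (hfac : ∀ s a s', Pstar s a s' = μstar s' ⬝ᵥ φstar s a)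
    (hP0 : ∀ s a s', 0 ≤ Pstar s a s') (hP1 : ∀ s a, ∑ s', Pstar s a s' = 1)
    (hμ : ∀ g : S → ℝ, (∀ s, g s ∈ Set.Icc (0 : ℝ) 1) →
      Real.sqrt ((∑ s, g s • μstar s) ⬝ᵥ (∑ s, g s • μstar s)) ≤ Real.sqrt d)
    (k : ℕ) (hk : 1 ≤ k) (πt : Fin k → S → A → ℝ)
    (hπt0 : ∀ i s a, 0 ≤ πt i s a) (hπt1 : ∀ i s, ∑ a, πt i s a = 1)
    (ξ lam : ℝ) (hξ : ξ ∈ Set.Ioc (0 : ℝ) 1) (hlam : 0 < lam)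
    (B : ℝ) (g : S → A → ℝ) (hg : ∀ s a, |g s a| ≤ B)
    (π : S → A → ℝ) (hπ0 : ∀ s a, 0 ≤ π s a) (hπ1 : ∀ s, ∑ a, π s a = 1)
    (ρ : S → A → ℝ) (ρs : S → ℝ) (πbar : S → A → ℝ)
    (Sig : Matrix (Fin d) (Fin d) ℝ)
    (hρeq : ∀ s a, ρ s a = (1 / (k : ℝ)) * ∑ i, docc γ d0 Pstar (πt i) s a)
    (hρseq : ∀ s, ρs s = ∑ a, ρ s a)
    (hπbeq : ∀ s a, πbar s a =
      ξ / (Fintype.card A : ℝ) + (1 - ξ) * ((1 / (k : ℝ)) * ∑ i, πt i s a))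
    (hSigeq : Sig =
      (k : ℝ) • (∑ s, ∑ a, ρ s a • Matrix.vecMulVec (φstar s a) (φstar s a)) +
        lam • (1 : Matrix (Fin d) (Fin d) ℝ)) :
    (∑ st, ∑ ta, docc γ d0 Pstar π st ta *
        ∑ s, Pstar st ta s * ∑ a, π s a * g s a) ≤
      (∑ st, ∑ ta, docc γ d0 Pstar π st ta *
          Real.sqrt (φstar st ta ⬝ᵥ (Sig⁻¹ *ᵥ φstar st ta))) *
        Real.sqrt (((k : ℝ) * (Fintype.card A : ℝ) / (ξ * γ)) *
            (∑ s, ρs s * ∑ a, πbar s a * (g s a) ^ 2) + lam * d * B ^ 2) := by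
  obtain ⟨hγ0, hγ1⟩ := hγ
  obtain ⟨hξ0, hξ1⟩ := hξ
  have hk0 : (0:ℝ) < (k:ℝ) := by exact_mod_cast Nat.lt_of_lt_of_le Nat.zero_lt_one hk
  have hD0 : ∀ st ta, 0 ≤ docc γ d0 Pstar π st ta :=
    fun st ta => Stmt7Aux.docc_nonneg hγ1.le hγ0.le hd00 hP0 hπ0 st ta
  have hρ0 : ∀ s a, 0 ≤ ρ s a := by
    intro s a
    rw [hρeq]
    exact mul_nonneg (by positivity) (Finset.sum_nonneg fun i _ =>
      Stmt7Aux.docc_nonneg hγ1.le hγ0.le hd00 hP0 (hπt0 i) s a)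
  have hπbar0 : ∀ s a, 0 ≤ πbar s a := by
    intro s a
    rw [hπbeq]
    have h1 : (0:ℝ) ≤ ξ / (Fintype.card A : ℝ) := div_nonneg hξ0.le (Nat.cast_nonneg _)
    have h2 : (0:ℝ) ≤ (1 - ξ) * ((1 / (k : ℝ)) * ∑ i, πt i s a) :=
      mul_nonneg (by linarith) (mul_nonneg (by positivity)
        (Finset.sum_nonneg fun i _ => hπt0 i s a))
    exact add_nonneg h1 h2
  have hπle1 : ∀ s a, π s a ≤ 1 := by
    intro s a
    calc π s a ≤ ∑ a', π s a' :=
          Finset.single_le_sum (fun a' _ => hπ0 s a') (mem_univ a)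
      _ = 1 := hπ1 s
  set f : S → ℝ := fun s => ∑ a, π s a * g s a with hf
  set fp : S → ℝ := fun s => max (f s) 0 with hfp
  set w : Fin d → ℝ := ∑ s, fp s • μstar s with hw
  have hfp0 : ∀ s, 0 ≤ fp s := fun s => le_max_right _ _
  have hwdot : ∀ v : Fin d → ℝ, w ⬝ᵥ v = ∑ s, fp s * (μstar s ⬝ᵥ v) := by
    intro v
    rw [hw]
    simp only [dotProduct, Finset.sum_apply, Pi.smul_apply, smul_eq_mul,
      Finset.sum_mul, Finset.mul_sum]
    rw [Finset.sum_comm]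
    exact Finset.sum_congr rfl fun s _ => Finset.sum_congr rfl fun i _ => by ring
  -- quadratic form expansion
  have hquad : ∀ x y : Fin d → ℝ, x ⬝ᵥ (Sig *ᵥ y) =
      (k:ℝ) * (∑ s, ∑ a, ρ s a * ((φstar s a ⬝ᵥ x) * (φstar s a ⬝ᵥ y))) +
        lam * (x ⬝ᵥ y) := by
    intro x y
    rw [hSigeq]
    exact Stmt7Aux.quad_expand (k:ℝ) lam ρ φstar x y
  have hsymm : ∀ x y : Fin d → ℝ, x ⬝ᵥ (Sig *ᵥ y) = y ⬝ᵥ (Sig *ᵥ x) := by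
    intro x y
    rw [hquad, hquad]
    congr 1
    · congr 1
      exact Finset.sum_congr rfl fun s _ => Finset.sum_congr rfl fun a _ => by ring
    · rw [dotProduct_comm]
  have hdotself : ∀ x : Fin d → ℝ, 0 ≤ x ⬝ᵥ x := by
    intro x
    exact Finset.sum_nonneg fun i _ => mul_self_nonneg (x i)
  have hpos : ∀ x : Fin d → ℝ, 0 ≤ x ⬝ᵥ (Sig *ᵥ x) := by
    intro x
    rw [hquad]
    refine add_nonneg (mul_nonneg hk0.le (Finset.sum_nonneg fun s _ =>
      Finset.sum_nonneg fun a _ => mul_nonneg (hρ0 s a) (mul_self_nonneg _)))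
      (mul_nonneg hlam.le (hdotself x))
  -- positive definiteness and invertibility
  have hSapply : ∀ i j, Sig i j = (k:ℝ) * ∑ s, ∑ a, ρ s a * (φstar s a i * φstar s a j)
      + lam * ((1 : Matrix (Fin d) (Fin d) ℝ) i j) := by
    intro i j
    rw [hSigeq]
    simp [Matrix.add_apply, Matrix.smul_apply, Matrix.sum_apply, Matrix.vecMulVec_apply]
  have hPD : Sig.PosDef := by
    refine Matrix.PosDef.of_dotProduct_mulVec_pos ?_ ?_
    · show Sigᴴ = Sig
      ext i j
      rw [Matrix.conjTranspose_apply, star_trivial, hSapply, hSapply]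
      congr 1
      · congr 1
        exact Finset.sum_congr rfl fun s _ => Finset.sum_congr rfl fun a _ => by ring
      · congr 1
        simp [Matrix.one_apply, eq_comm]
    · intro x hx
      have hsx : star x = x := by funext i; exact star_trivial _
      rw [hsx, hquad]
      have h1 : 0 ≤ (k:ℝ) * (∑ s, ∑ a, ρ s a * ((φstar s a ⬝ᵥ x) * (φstar s a ⬝ᵥ x))) :=
        mul_nonneg hk0.le (Finset.sum_nonneg fun s _ =>
          Finset.sum_nonneg fun a _ => mul_nonneg (hρ0 s a) (mul_self_nonneg _))
      have h2 : 0 < x ⬝ᵥ x := by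
        obtain ⟨i, hi⟩ := Function.ne_iff.1 hx
        have hi' : x i ≠ 0 := by simpa using hi
        have hip : 0 < x i * x i := mul_self_pos.2 hi'
        exact lt_of_lt_of_le hip
          (Finset.single_le_sum (fun j _ => mul_self_nonneg (x j)) (mem_univ i))
      linarith [mul_pos hlam h2]
  have hdet : IsUnit Sig.det := (Matrix.isUnit_iff_isUnit_det Sig).1 hPD.isUnit
  have hinv : Sig * Sig⁻¹ = 1 := Matrix.mul_nonsing_inv Sig hdet
  have hq0 : ∀ s, 0 ≤ ∑ a, πbar s a * g s a ^ 2 := fun s =>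
    Finset.sum_nonneg fun a _ => mul_nonneg (hπbar0 s a) (sq_nonneg _)
  set Rv : ℝ := ((k : ℝ) * (Fintype.card A : ℝ) / (ξ * γ)) *
    (∑ s, ρs s * ∑ a, πbar s a * g s a ^ 2) + lam * d * B ^ 2 with hRv
  -- bound on ‖w‖²
  have hww : w ⬝ᵥ w ≤ (d:ℝ) * B ^ 2 := by
    have hw0case : ∀ (hfz : ∀ s, fp s = 0), w ⬝ᵥ w ≤ (d:ℝ) * B ^ 2 := by
      intro hfz
      have : w = 0 := by
        rw [hw]
        refine Finset.sum_eq_zero fun s _ => by rw [hfz s, zero_smul]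
      rw [this]
      have : (0 : Fin d → ℝ) ⬝ᵥ (0 : Fin d → ℝ) = 0 := zero_dotProduct 0
      rw [this]
      positivity
    rcases isEmpty_or_nonempty S with hS | hS
    · have : w = 0 := by rw [hw]; simp
      rw [this]
      have : (0 : Fin d → ℝ) ⬝ᵥ (0 : Fin d → ℝ) = 0 := zero_dotProduct 0
      rw [this]
      positivity
    rcases isEmpty_or_nonempty A with hA | hA
    · refine hw0case fun s => ?_
      have hE : fp s = max (f s) 0 := by rw [hfp]
      have hfE : f s = ∑ a, π s a * g s a := by rw [hf]
      rw [hE, hfE]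
      simp
    have hB0 : 0 ≤ B :=
      le_trans (abs_nonneg _) (hg (Classical.arbitrary S) (Classical.arbitrary A))
    rcases eq_or_lt_of_le hB0 with hB | hB
    · refine hw0case fun s => ?_
      have hg0 : ∀ a, g s a = 0 := fun a =>
        abs_eq_zero.1 (le_antisymm (hB ▸ hg s a) (abs_nonneg _))
      have hE : fp s = max (f s) 0 := by rw [hfp]
      have hfE : f s = ∑ a, π s a * g s a := by rw [hf]
      rw [hE, hfE]
      simp [hg0]
    · have hfle : ∀ s, fp s ≤ B := by
        intro s
        rw [hfp]
        refine max_le ?_ hB.le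
        rw [hf]
        calc ∑ a, π s a * g s a ≤ ∑ a, π s a * B :=
              Finset.sum_le_sum fun a _ => mul_le_mul_of_nonneg_left
                (le_trans (le_abs_self _) (hg s a)) (hπ0 s a)
          _ = B := by rw [← Finset.sum_mul, hπ1, one_mul]
      have happ := hμ (fun s => fp s / B) (fun s =>
        ⟨div_nonneg (hfp0 s) hB.le, (div_le_one hB).2 (hfle s)⟩)
      set v : Fin d → ℝ := ∑ s, (fp s / B) • μstar s with hv
      have hwv : w = B • v := by
        rw [hw, hv, Finset.smul_sum]
        refine Finset.sum_congr rfl fun s _ => ?_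
        rw [smul_smul]
        congr 1
        field_simp
      have hv0 : 0 ≤ v ⬝ᵥ v := hdotself v
      have hv2 : v ⬝ᵥ v ≤ (d:ℝ) := by
        calc v ⬝ᵥ v = Real.sqrt (v ⬝ᵥ v) ^ 2 := (Real.sq_sqrt hv0).symm
          _ ≤ Real.sqrt (d:ℝ) ^ 2 := by
              have : Real.sqrt (v ⬝ᵥ v) ≤ Real.sqrt (d:ℝ) := happ
              exact pow_le_pow_left₀ (Real.sqrt_nonneg _) this 2
          _ = (d:ℝ) := Real.sq_sqrt (Nat.cast_nonneg d)
      calc w ⬝ᵥ w = B ^ 2 * (v ⬝ᵥ v) := by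
            rw [hwv, smul_dotProduct, dotProduct_smul, smul_eq_mul, smul_eq_mul]
            ring
        _ ≤ B ^ 2 * (d:ℝ) := mul_le_mul_of_nonneg_left hv2 (sq_nonneg _)
        _ = (d:ℝ) * B ^ 2 := by ring
  -- pointwise bound fp² ≤ (cA/ξ) q
  have hfpq : ∀ s', fp s' * fp s' ≤ ((Fintype.card A : ℝ) / ξ) * (∑ a', πbar s' a' * g s' a' ^ 2) := by
    intro s'
    rcases isEmpty_or_nonempty A with hA | hA
    · have h1 : fp s' = 0 := by
        have hE : fp s' = max (f s') 0 := by rw [hfp]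
        have hfE : f s' = ∑ a, π s' a * g s' a := by rw [hf]
        rw [hE, hfE]
        simp
      have h2 : (∑ a', πbar s' a' * g s' a' ^ 2) = 0 := by simp
      rw [h1, h2]
      simp
    · have step1 : fp s' * fp s' ≤ ∑ a, π s' a * g s' a ^ 2 := by
        have h1 : fp s' * fp s' ≤ f s' * f s' := by
          have hE : fp s' = max (f s') 0 := by rw [hfp]
          rw [hE]
          rcases le_or_gt (f s') 0 with h | h
          · rw [max_eq_right h]
            simpa using mul_self_nonneg (f s')
          · rw [max_eq_left h.le]
        refine le_trans h1 ?_
        have hcs := Finset.sum_mul_sq_le_sq_mul_sq univ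
          (fun a => Real.sqrt (π s' a)) (fun a => Real.sqrt (π s' a) * g s' a)
        have e1 : ∑ a, Real.sqrt (π s' a) * (Real.sqrt (π s' a) * g s' a) = f s' := by
          have hfE : f s' = ∑ a, π s' a * g s' a := by rw [hf]
          rw [hfE]
          exact Finset.sum_congr rfl fun a _ => by
            rw [← mul_assoc, Real.mul_self_sqrt (hπ0 s' a)]
        have e2 : ∑ a, Real.sqrt (π s' a) ^ 2 = 1 := by
          rw [← hπ1 s']
          exact Finset.sum_congr rfl fun a _ => Real.sq_sqrt (hπ0 s' a)
        have e3 : ∑ a, (Real.sqrt (π s' a) * g s' a) ^ 2 = ∑ a, π s' a * g s' a ^ 2 := by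
          refine Finset.sum_congr rfl fun a _ => ?_
          rw [mul_pow, Real.sq_sqrt (hπ0 s' a)]
        rw [e1, e2, e3, one_mul] at hcs
        calc f s' * f s' = f s' ^ 2 := by ring
          _ ≤ ∑ a, π s' a * g s' a ^ 2 := hcs
      have step2 : ∑ a, π s' a * g s' a ^ 2 ≤ ((Fintype.card A : ℝ) / ξ) * (∑ a', πbar s' a' * g s' a' ^ 2) := by
        rw [Finset.mul_sum]
        refine Finset.sum_le_sum fun a _ => ?_
        have hcApos : (0:ℝ) < (Fintype.card A : ℝ) := by
          exact_mod_cast Fintype.card_pos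
        have hπb : ξ / (Fintype.card A : ℝ) ≤ πbar s' a := by
          have h2 : 0 ≤ (1 - ξ) * ((1 / (k : ℝ)) * ∑ i, πt i s' a) :=
            mul_nonneg (by linarith) (mul_nonneg (by positivity)
              (Finset.sum_nonneg fun i _ => hπt0 i s' a))
          rw [hπbeq]
          linarith
        have h3 : (ξ / (Fintype.card A : ℝ)) * g s' a ^ 2 ≤ πbar s' a * g s' a ^ 2 :=
          mul_le_mul_of_nonneg_right hπb (sq_nonneg _)
        calc π s' a * g s' a ^ 2 ≤ g s' a ^ 2 := by
              have := mul_le_mul_of_nonneg_right (hπle1 s' a) (sq_nonneg (g s' a))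
              linarith
          _ = ((Fintype.card A : ℝ) / ξ) * ((ξ / (Fintype.card A : ℝ)) * g s' a ^ 2) := by
              field_simp
          _ ≤ ((Fintype.card A : ℝ) / ξ) * (πbar s' a * g s' a ^ 2) :=
              mul_le_mul_of_nonneg_left h3 (by positivity)
      exact le_trans step1 step2
  -- occupancy flow bound
  have hflow : ∀ s', γ * ∑ s, ∑ a, ρ s a * Pstar s a s' ≤ ρs s' := by
    intro s'
    have hfl : ∀ i : Fin k, γ * ∑ s, ∑ a, docc γ d0 Pstar (πt i) s a * Pstar s a s' ≤
        ∑ a, docc γ d0 Pstar (πt i) s' a := fun i =>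
      Stmt7Aux.docc_flow hγ0 hγ1 hd00 hd01 hP0 hP1 (hπt0 i) (hπt1 i) s'
    have e1 : ∑ s, ∑ a, ρ s a * Pstar s a s' =
        (1 / (k:ℝ)) * ∑ i, ∑ s, ∑ a, docc γ d0 Pstar (πt i) s a * Pstar s a s' := by
      calc ∑ s, ∑ a, ρ s a * Pstar s a s'
          = ∑ s, ∑ a, (1 / (k:ℝ)) * ∑ i, docc γ d0 Pstar (πt i) s a * Pstar s a s' := by
            refine Finset.sum_congr rfl fun s _ => Finset.sum_congr rfl fun a _ => ?_
            rw [hρeq, mul_assoc, Finset.sum_mul]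
        _ = (1 / (k:ℝ)) * ∑ s, ∑ a, ∑ i, docc γ d0 Pstar (πt i) s a * Pstar s a s' := by
            rw [Finset.mul_sum]
            refine Finset.sum_congr rfl fun s _ => ?_
            rw [Finset.mul_sum]
        _ = (1 / (k:ℝ)) * ∑ i, ∑ s, ∑ a, docc γ d0 Pstar (πt i) s a * Pstar s a s' := by
            congr 1
            calc ∑ s, ∑ a, ∑ i, docc γ d0 Pstar (πt i) s a * Pstar s a s'
                = ∑ s, ∑ i, ∑ a, docc γ d0 Pstar (πt i) s a * Pstar s a s' :=
                  Finset.sum_congr rfl fun s _ => Finset.sum_comm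
              _ = ∑ i, ∑ s, ∑ a, docc γ d0 Pstar (πt i) s a * Pstar s a s' :=
                  Finset.sum_comm
    have e2 : ρs s' = (1 / (k:ℝ)) * ∑ i, ∑ a, docc γ d0 Pstar (πt i) s' a := by
      rw [hρseq]
      calc ∑ a, ρ s' a = ∑ a, (1 / (k:ℝ)) * ∑ i, docc γ d0 Pstar (πt i) s' a :=
            Finset.sum_congr rfl fun a _ => hρeq s' a
        _ = (1 / (k:ℝ)) * ∑ a, ∑ i, docc γ d0 Pstar (πt i) s' a := by
            rw [← Finset.mul_sum]
        _ = (1 / (k:ℝ)) * ∑ i, ∑ a, docc γ d0 Pstar (πt i) s' a := by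
            congr 1
            exact Finset.sum_comm
    rw [e1, e2, ← mul_assoc, mul_comm γ (1 / (k:ℝ)), mul_assoc, Finset.mul_sum]
    refine mul_le_mul_of_nonneg_left ?_ (by positivity)
    exact Finset.sum_le_sum fun i _ => hfl i
  -- quadratic bound for w
  have hφw : ∀ s a, φstar s a ⬝ᵥ w = ∑ s', Pstar s a s' * fp s' := by
    intro s a
    rw [dotProduct_comm, hwdot]
    exact Finset.sum_congr rfl fun s' _ => by rw [hfac s a s']; ring
  have hsq : ∀ s a, (φstar s a ⬝ᵥ w) * (φstar s a ⬝ᵥ w) ≤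
      ∑ s', Pstar s a s' * (fp s' * fp s') := by
    intro s a
    rw [hφw]
    have hcs := Finset.sum_mul_sq_le_sq_mul_sq univ
      (fun s' => Real.sqrt (Pstar s a s')) (fun s' => Real.sqrt (Pstar s a s') * fp s')
    have e1 : ∑ s', Real.sqrt (Pstar s a s') * (Real.sqrt (Pstar s a s') * fp s') =
        ∑ s', Pstar s a s' * fp s' :=
      Finset.sum_congr rfl fun s' _ => by
        rw [← mul_assoc, Real.mul_self_sqrt (hP0 s a s')]
    have e2 : ∑ s', Real.sqrt (Pstar s a s') ^ 2 = 1 := by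
      rw [← hP1 s a]
      exact Finset.sum_congr rfl fun s' _ => Real.sq_sqrt (hP0 s a s')
    have e3 : ∑ s', (Real.sqrt (Pstar s a s') * fp s') ^ 2 =
        ∑ s', Pstar s a s' * (fp s' * fp s') :=
      Finset.sum_congr rfl fun s' _ => by
        rw [mul_pow, Real.sq_sqrt (hP0 s a s')]
        ring
    rw [e1, e2, e3, one_mul] at hcs
    calc (∑ s', Pstar s a s' * fp s') * (∑ s', Pstar s a s' * fp s')
        = (∑ s', Pstar s a s' * fp s') ^ 2 := by ring
      _ ≤ ∑ s', Pstar s a s' * (fp s' * fp s') := hcs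
  have hQw : w ⬝ᵥ (Sig *ᵥ w) ≤ Rv := by
    rw [hquad]
    have b2 : (k:ℝ) * (∑ s, ∑ a, ρ s a * ((φstar s a ⬝ᵥ w) * (φstar s a ⬝ᵥ w))) ≤
        ((k : ℝ) * (Fintype.card A : ℝ) / (ξ * γ)) * (∑ s, ρs s * ∑ a, πbar s a * g s a ^ 2) := by
      calc (k:ℝ) * (∑ s, ∑ a, ρ s a * ((φstar s a ⬝ᵥ w) * (φstar s a ⬝ᵥ w)))
          ≤ (k:ℝ) * (∑ s, ∑ a, ρ s a * ∑ s', Pstar s a s' * (((Fintype.card A : ℝ) / ξ) * (∑ a', πbar s' a' * g s' a' ^ 2))) := by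
            refine mul_le_mul_of_nonneg_left (Finset.sum_le_sum fun s _ =>
              Finset.sum_le_sum fun a _ => mul_le_mul_of_nonneg_left ?_ (hρ0 s a)) hk0.le
            refine le_trans (hsq s a) (Finset.sum_le_sum fun s' _ => ?_)
            exact mul_le_mul_of_nonneg_left (hfpq s') (hP0 s a s')
        _ = (k:ℝ) * ∑ s', (∑ s, ∑ a, ρ s a * Pstar s a s') * (((Fintype.card A : ℝ) / ξ) * (∑ a', πbar s' a' * g s' a' ^ 2)) := by
            congr 1
            calc ∑ s, ∑ a, ρ s a * ∑ s', Pstar s a s' * (((Fintype.card A : ℝ) / ξ) * (∑ a', πbar s' a' * g s' a' ^ 2))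
                = ∑ s, ∑ a, ∑ s', ρ s a * (Pstar s a s' * (((Fintype.card A : ℝ) / ξ) * (∑ a', πbar s' a' * g s' a' ^ 2))) := by
                  refine Finset.sum_congr rfl fun s _ => Finset.sum_congr rfl fun a _ => ?_
                  rw [Finset.mul_sum]
              _ = ∑ s', ∑ s, ∑ a, ρ s a * (Pstar s a s' * (((Fintype.card A : ℝ) / ξ) * (∑ a', πbar s' a' * g s' a' ^ 2))) := by
                  calc ∑ s, ∑ a, ∑ s', ρ s a * (Pstar s a s' * (((Fintype.card A : ℝ) / ξ) * (∑ a', πbar s' a' * g s' a' ^ 2)))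
                      = ∑ s, ∑ s', ∑ a, ρ s a * (Pstar s a s' * (((Fintype.card A : ℝ) / ξ) * (∑ a', πbar s' a' * g s' a' ^ 2))) :=
                        Finset.sum_congr rfl fun s _ => Finset.sum_comm
                    _ = ∑ s', ∑ s, ∑ a, ρ s a * (Pstar s a s' * (((Fintype.card A : ℝ) / ξ) * (∑ a', πbar s' a' * g s' a' ^ 2))) :=
                        Finset.sum_comm
              _ = ∑ s', (∑ s, ∑ a, ρ s a * Pstar s a s') * (((Fintype.card A : ℝ) / ξ) * (∑ a', πbar s' a' * g s' a' ^ 2)) := by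
                  refine Finset.sum_congr rfl fun s' _ => ?_
                  rw [Finset.sum_mul]
                  refine Finset.sum_congr rfl fun s _ => ?_
                  rw [Finset.sum_mul]
                  exact Finset.sum_congr rfl fun a _ => by ring
        _ ≤ (k:ℝ) * ∑ s', (ρs s' / γ) * (((Fintype.card A : ℝ) / ξ) * (∑ a', πbar s' a' * g s' a' ^ 2)) := by
            refine mul_le_mul_of_nonneg_left (Finset.sum_le_sum fun s' _ => ?_) hk0.le
            refine mul_le_mul_of_nonneg_right ?_
              (mul_nonneg (by positivity) (hq0 s'))
            rw [le_div_iff₀ hγ0, mul_comm]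
            exact hflow s'
        _ = ((k : ℝ) * (Fintype.card A : ℝ) / (ξ * γ)) * (∑ s, ρs s * ∑ a, πbar s a * g s a ^ 2) := by
            rw [Finset.mul_sum, Finset.mul_sum]
            refine Finset.sum_congr rfl fun s' _ => ?_
            field_simp
    have b1 : lam * (w ⬝ᵥ w) ≤ lam * ((d:ℝ) * B ^ 2) :=
      mul_le_mul_of_nonneg_left hww hlam.le
    rw [hRv]
    calc (k:ℝ) * (∑ s, ∑ a, ρ s a * ((φstar s a ⬝ᵥ w) * (φstar s a ⬝ᵥ w))) + lam * (w ⬝ᵥ w)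
        ≤ ((k : ℝ) * (Fintype.card A : ℝ) / (ξ * γ)) * (∑ s, ρs s * ∑ a, πbar s a * g s a ^ 2) + lam * ((d:ℝ) * B ^ 2) :=
          add_le_add b2 b1
      _ = ((k : ℝ) * (Fintype.card A : ℝ) / (ξ * γ)) * (∑ s, ρs s * ∑ a, πbar s a * g s a ^ 2) + lam * d * B ^ 2 := by ring
  have hRv0 : 0 ≤ Rv := le_trans (hpos w) hQw
  -- per-(st,ta) Cauchy-Schwarz step
  have stepCS : ∀ st ta, w ⬝ᵥ φstar st ta ≤
      Real.sqrt (φstar st ta ⬝ᵥ (Sig⁻¹ *ᵥ φstar st ta)) * Real.sqrt Rv := by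
    intro st ta
    set φ : Fin d → ℝ := φstar st ta with hφdef
    set u : Fin d → ℝ := Sig⁻¹ *ᵥ φ with hu
    have hSu : Sig *ᵥ u = φ := by
      rw [hu, Matrix.mulVec_mulVec, hinv, Matrix.one_mulVec]
    have huu : u ⬝ᵥ (Sig *ᵥ u) = φ ⬝ᵥ u := by
      rw [hSu, dotProduct_comm]
    have h1 : w ⬝ᵥ φ = u ⬝ᵥ (Sig *ᵥ w) := by
      rw [← hSu]
      exact hsymm w u
    have hcs := Stmt7Aux.cs_bound Sig hsymm hpos u w
    calc w ⬝ᵥ φ = u ⬝ᵥ (Sig *ᵥ w) := h1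
      _ ≤ |u ⬝ᵥ (Sig *ᵥ w)| := le_abs_self _
      _ = Real.sqrt ((u ⬝ᵥ (Sig *ᵥ w)) ^ 2) := (Real.sqrt_sq_eq_abs _).symm
      _ ≤ Real.sqrt ((u ⬝ᵥ (Sig *ᵥ u)) * (w ⬝ᵥ (Sig *ᵥ w))) := Real.sqrt_le_sqrt hcs
      _ = Real.sqrt (u ⬝ᵥ (Sig *ᵥ u)) * Real.sqrt (w ⬝ᵥ (Sig *ᵥ w)) :=
          Real.sqrt_mul (hpos u) _
      _ ≤ Real.sqrt (φ ⬝ᵥ u) * Real.sqrt Rv := by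
          rw [huu]
          exact mul_le_mul_of_nonneg_left (Real.sqrt_le_sqrt hQw) (Real.sqrt_nonneg _)
  -- assemble
  have stepA : (∑ st, ∑ ta, docc γ d0 Pstar π st ta *
      ∑ s, Pstar st ta s * ∑ a, π s a * g s a) ≤
      ∑ st, ∑ ta, docc γ d0 Pstar π st ta * (w ⬝ᵥ φstar st ta) := by
    refine Finset.sum_le_sum fun st _ => Finset.sum_le_sum fun ta _ => ?_
    refine mul_le_mul_of_nonneg_left ?_ (hD0 st ta)
    have hwφ : w ⬝ᵥ φstar st ta = ∑ s, Pstar st ta s * fp s := by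
      rw [hwdot]
      exact Finset.sum_congr rfl fun s _ => by rw [hfac st ta s]; ring
    rw [hwφ]
    refine Finset.sum_le_sum fun s _ => ?_
    refine mul_le_mul_of_nonneg_left ?_ (hP0 st ta s)
    have : fp s = max (f s) 0 := by rw [hfp]
    rw [this]
    exact le_max_left _ _
  calc (∑ st, ∑ ta, docc γ d0 Pstar π st ta * ∑ s, Pstar st ta s * ∑ a, π s a * g s a)
      ≤ ∑ st, ∑ ta, docc γ d0 Pstar π st ta * (w ⬝ᵥ φstar st ta) := stepA
    _ ≤ ∑ st, ∑ ta, docc γ d0 Pstar π st ta *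
        (Real.sqrt (φstar st ta ⬝ᵥ (Sig⁻¹ *ᵥ φstar st ta)) * Real.sqrt Rv) :=
        Finset.sum_le_sum fun st _ => Finset.sum_le_sum fun ta _ =>
          mul_le_mul_of_nonneg_left (stepCS st ta) (hD0 st ta)
    _ = (∑ st, ∑ ta, docc γ d0 Pstar π st ta *
        Real.sqrt (φstar st ta ⬝ᵥ (Sig⁻¹ *ᵥ φstar st ta))) * Real.sqrt Rv := by
        rw [Finset.sum_mul]
        refine Finset.sum_congr rfl fun st _ => ?_
        rw [Finset.sum_mul]
        exact Finset.sum_congr rfl fun ta _ => (mul_assoc _ _ _).symm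

/-- One-step-back inequality in the true model (Lemma A.3 of the paper): in a
low-rank MDP `P*(s'|s,a) = ⟨μ*(s'), φ*(s,a)⟩`, with
`ρ(s,a) = (1/k) Σ_i d_{P*}^{π̃_i}(s,a)` (state marginal `ρ(s)`),
`π̄(a|s) = ξ/A + (1−ξ)(1/k)Σ_i π̃_i(a|s)`, and
`Σ_{ρ,φ*} = k Σ_{s,a} ρ(s,a) φ*φ*ᵀ + λ I_d`, for any `g` with `‖g‖_∞ ≤ B`
and any policy `π`:
`Σ_{s̃,ã} d_{P*}^π(s̃,ã) Σ_s P*(s|s̃,ã) Σ_a π(a|s) g(s,a)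
  ≤ (Σ_{s̃,ã} d_{P*}^π(s̃,ã) ‖φ*(s̃,ã)‖_{Σ_{ρ,φ*}⁻¹})
      · √((kA/(ξγ)) Σ_s ρ(s) Σ_a π̄(a|s) g(s,a)² + λ d B²)`. -/
theorem stmt_7 {S A : Type*} [Fintype S] [Fintype A] [DecidableEq S] {d : ℕ}
    (γ : ℝ) (hγ : γ ∈ Set.Ioo (0 : ℝ) 1)
    (d0 : S → ℝ) (hd00 : ∀ s, 0 ≤ d0 s) (hd01 : ∑ s, d0 s = 1)
    (φstar : S → A → Fin d → ℝ) (μstar : S → Fin d → ℝ)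
    (Pstar : S → A → S → ℝ)
    (hfac : ∀ s a s', Pstar s a s' = μstar s' ⬝ᵥ φstar s a)
    (hP0 : ∀ s a s', 0 ≤ Pstar s a s') (hP1 : ∀ s a, ∑ s', Pstar s a s' = 1)
    (hφ : ∀ s a, Real.sqrt (φstar s a ⬝ᵥ φstar s a) ≤ 1)
    (hμ : ∀ g : S → ℝ, (∀ s, g s ∈ Set.Icc (0 : ℝ) 1) →
      Real.sqrt ((∑ s, g s • μstar s) ⬝ᵥ (∑ s, g s • μstar s)) ≤ Real.sqrt d)
    (k : ℕ) (hk : 1 ≤ k) (πt : Fin k → S → A → ℝ)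
    (hπt0 : ∀ i s a, 0 ≤ πt i s a) (hπt1 : ∀ i s, ∑ a, πt i s a = 1)
    (ξ lam : ℝ) (hξ : ξ ∈ Set.Ioc (0 : ℝ) 1) (hlam : 0 < lam)
    (B : ℝ) (g : S → A → ℝ) (hg : ∀ s a, |g s a| ≤ B)
    (π : S → A → ℝ) (hπ0 : ∀ s a, 0 ≤ π s a) (hπ1 : ∀ s, ∑ a, π s a = 1) :
    letI ρ : S → A → ℝ :=
      fun s a => (1 / (k : ℝ)) * ∑ i, docc γ d0 Pstar (πt i) s a
    letI ρs : S → ℝ := fun s => ∑ a, ρ s a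
    letI πbar : S → A → ℝ := fun s a =>
      ξ / (Fintype.card A : ℝ) + (1 - ξ) * ((1 / (k : ℝ)) * ∑ i, πt i s a)
    letI Sig : Matrix (Fin d) (Fin d) ℝ :=
      (k : ℝ) • (∑ s, ∑ a, ρ s a • Matrix.vecMulVec (φstar s a) (φstar s a)) +
        lam • (1 : Matrix (Fin d) (Fin d) ℝ)
    (∑ st, ∑ ta, docc γ d0 Pstar π st ta *
        ∑ s, Pstar st ta s * ∑ a, π s a * g s a) ≤
      (∑ st, ∑ ta, docc γ d0 Pstar π st ta *
          Real.sqrt (φstar st ta ⬝ᵥ (Sig⁻¹ *ᵥ φstar st ta))) *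
        Real.sqrt (((k : ℝ) * (Fintype.card A : ℝ) / (ξ * γ)) *
            (∑ s, ρs s * ∑ a, πbar s a * (g s a) ^ 2) + lam * d * B ^ 2) := by
  exact stmt7_core γ hγ d0 hd00 hd01 φstar μstar Pstar hfac hP0 hP1 hμ k hk πt hπt0 hπt1
    ξ lam hξ hlam B g hg π hπ0 hπ1 _ _ _ _ (fun s a => rfl) (fun s => rfl)
    (fun s a => rfl) rfl
end
end

section
/- The hard lower-bound instance M_{(i*,a*)} admits a rank-d factorization: there exist maps φ : 𝒮×𝒜 → ℝ^d and μ : 𝒮 → ℝ^d such that P(s'|s,a) = ⟨φ(s,a), μ(s')⟩ for all (s,a,s'), ‖φ(s,a)‖₂ ≤ 1 for all (s,a), and for every g : 𝒮 → [0,1], ‖Σ_{s∈𝒮} μ(s)·g(s)‖₂ ≤ √(S−1); in particular, when S = d+1 this bound equals √d, so M_{(i*,a*)} is a low-rank MDP of dimension d (i.e., it satisfies ‖φ(s,a)‖₂ ≤ 1 and ‖Σ_s μ(s)g(s)‖₂ ≤ √d). -/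
/-!
Every next-state vector `μ(s')` is a nonnegative multiple of a unit vector: one coordinate for
each `s_{2,i}`, one each for `s^g`, `s^b`, `s^o`, and a last coordinate shared by all `S − d`
outlier states, each carrying weight `1/√(S−d)`. The feature `φ(s,a)` lists the transition
probabilities in these coordinates, the outlier block again scaled by `1/√(S−d)` so that the
products give `1/(S−d)`; its norm is at most one because `(1/2+ε)² + (1/2−ε)² ≤ 1`.
As `μ ≥ 0`, the norm of `∑ g(s) μ(s)` with `0 ≤ g ≤ 1` is largest at `g ≡ 1`, where it equals
`√((d − 1) + (S − d)) = √(S − 1)`.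
-/

open Finset

noncomputable section

/-- State space of the hard lower-bound instance: the initial state `s_{1,1}`,
the second-level states `s_{2,1},…,s_{2,d−4}`, the good state `s^g`, the bad
state `s^b`, the outlier hub `s^o`, and the outlier states `s^o_1,…,s^o_{S−d}`
(so there are `S` states in total when `S ≥ d`). -/
inductive HState (d S : ℕ) where
  | init : HState d S
  | second : Fin (d - 4) → HState d S
  | good : HState d S
  | bad : HState d S
  | outlierHub : HState d S
  | outlier : Fin (S - d) → HState d S
  deriving DecidableEq, Fintype

/-- Transition kernel of the hard instance `M_{(i*,a*)}`: from `s_{1,1}`, action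
`a_i` with `i ≤ d−4` leads deterministically to `s_{2,i}` and any other action
leads to `s^o`; from `s_{2,i}` with `(i,a) ≠ (i*,a*)` the next state is `s^g`
or `s^b` each with probability `1/2`, while from `s_{2,i*}` under `a*` it is
`s^g` with probability `1/2+ε` and `s^b` with probability `1/2−ε`; from `s^o`
and each `s^o_j` every action leads to a uniformly random outlier state; `s^g`
and `s^b` are absorbing. -/
def hP {d S A : ℕ} (istar : Fin (d - 4)) (astar : Fin A) (ε : ℝ) :
    HState d S → Fin A → HState d S → ℝ
  | .init, a, .second i => if (a : ℕ) = (i : ℕ) then 1 else 0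
  | .init, a, .outlierHub => if d - 4 ≤ (a : ℕ) then 1 else 0
  | .second i, a, .good => if i = istar ∧ a = astar then 1 / 2 + ε else 1 / 2
  | .second i, a, .bad => if i = istar ∧ a = astar then 1 / 2 - ε else 1 / 2
  | .outlierHub, _, .outlier _ => 1 / ((S - d : ℕ) : ℝ)
  | .outlier _, _, .outlier _ => 1 / ((S - d : ℕ) : ℝ)
  | .good, _, .good => 1
  | .bad, _, .bad => 1
  | _, _, _ => 0

/-- Reward of the hard instance: `1` at the good state, `1/2` at the outlier
states, `0` elsewhere. -/
def hR {d S : ℕ} : HState d S → ℝ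
  | .good => 1
  | .outlier _ => 1 / 2
  | _ => 0

open Matrix

def IsLowRankFactorization {σ α ι : Type*} [Fintype σ] [Fintype ι] (P : σ → α → σ → ℝ)
    (φ : σ → α → ι → ℝ) (μ : σ → ι → ℝ) (B : ℝ) : Prop :=
  (∀ s a s', P s a s' = φ s a ⬝ᵥ μ s') ∧ (∀ s a, Real.sqrt (φ s a ⬝ᵥ φ s a) ≤ 1) ∧
    ∀ g : σ → ℝ, (∀ s, g s ∈ Set.Icc (0 : ℝ) 1) →
      Real.sqrt ((∑ s, g s • μ s) ⬝ᵥ (∑ s, g s • μ s)) ≤ B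

theorem IsLowRankFactorization.comp_equiv {σ α ι κ : Type*} [Fintype σ] [Fintype ι] [Fintype κ]
    {P : σ → α → σ → ℝ} {φ : σ → α → ι → ℝ} {μ : σ → ι → ℝ} {B : ℝ}
    (h : IsLowRankFactorization P φ μ B) (e : κ ≃ ι) :
    IsLowRankFactorization P (fun s a => φ s a ∘ e) (fun s => μ s ∘ e) B := by
  have hdot (u v : ι → ℝ) : u ∘ e ⬝ᵥ v ∘ e = u ⬝ᵥ v := e.sum_comp fun k => u k * v k
  have hsum (g : σ → ℝ) : ∑ s, g s • (μ s ∘ e) = (∑ s, g s • μ s) ∘ e := by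
    ext k
    simp [Finset.sum_apply]
  obtain ⟨hP, hφ, hμ⟩ := h
  exact ⟨fun s a s' => (hP s a s').trans (hdot _ _).symm, fun s a => (hdot _ _).symm ▸ hφ s a,
    fun g hg => by simpa only [hsum, hdot] using hμ g hg⟩

theorem dotProduct_self_sum_smul_le_of_nonneg {σ ι : Type*} [Fintype σ] [Fintype ι]
    {μ : σ → ι → ℝ} (hμ : ∀ s, 0 ≤ μ s) {g : σ → ℝ} (hg : ∀ s, g s ∈ Set.Icc (0 : ℝ) 1) :
    (∑ s, g s • μ s) ⬝ᵥ (∑ s, g s • μ s) ≤ (∑ s, μ s) ⬝ᵥ (∑ s, μ s) := by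
  have hcoord (k : ι) : 0 ≤ (∑ s, g s • μ s) k ∧ (∑ s, g s • μ s) k ≤ (∑ s, μ s) k := by
    simp only [Finset.sum_apply, Pi.smul_apply, smul_eq_mul]
    exact ⟨Finset.sum_nonneg fun s _ => mul_nonneg (hg s).1 (hμ s k),
      Finset.sum_le_sum fun s _ => mul_le_of_le_one_left (hμ s k) (hg s).2⟩
  exact Finset.sum_le_sum fun k _ => mul_self_le_mul_self (hcoord k).1 (hcoord k).2

theorem HState.sum_univ {d S : ℕ} {M : Type*} [AddCommMonoid M] (f : HState d S → M) :
    ∑ s, f s = f .init + ∑ i, f (.second i) + f .good + f .bad + f .outlierHub +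
      ∑ j, f (.outlier j) := by
  let e : Unit ⊕ Fin (d - 4) ⊕ Unit ⊕ Unit ⊕ Unit ⊕ Fin (S - d) ≃ HState d S :=
    { toFun := Sum.elim (fun _ => .init) <| Sum.elim .second <| Sum.elim (fun _ => .good) <|
        Sum.elim (fun _ => .bad) <| Sum.elim (fun _ => .outlierHub) .outlier
      invFun
        | .init => .inl ()
        | .second i => .inr (.inl i)
        | .good => .inr (.inr (.inl ()))
        | .bad => .inr (.inr (.inr (.inl ())))
        | .outlierHub => .inr (.inr (.inr (.inr (.inl ()))))
        | .outlier j => .inr (.inr (.inr (.inr (.inr j))))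
      left_inv x := by rcases x with _ | _ | _ | _ | _ | _ <;> rfl
      right_inv s := by cases s <;> rfl }
  rw [← e.sum_comp]
  simp only [Fintype.sum_sum_type, Fintype.sum_unique, e, Equiv.coe_fn_mk, Sum.elim_inl,
    Sum.elim_inr]
  abel

/-- Coordinates of the factorization: `inl i` stands for `s_{2,i}`, and `inr 0`, `inr 1`,
`inr 2`, `inr 3` for `s^g`, `s^b`, `s^o` and the whole outlier block. -/
abbrev LowRankCoord (d : ℕ) := Fin (d - 4) ⊕ Fin 4

section Factorization

variable {d S A : ℕ}

def hPhi (istar : Fin (d - 4)) (astar : Fin A) (ε c : ℝ) :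
    HState d S → Fin A → LowRankCoord d → ℝ
  | .init, a => if h : (a : ℕ) < d - 4 then Pi.single (.inl ⟨a, h⟩) 1 else Pi.single (.inr 2) 1
  | .second i, a => hP (S := S) istar astar ε (.second i) a .good • Pi.single (.inr 0) 1 +
      hP (S := S) istar astar ε (.second i) a .bad • Pi.single (.inr 1) 1
  | .good, _ => Pi.single (.inr 0) 1
  | .bad, _ => Pi.single (.inr 1) 1
  | .outlierHub, _ => c • Pi.single (.inr 3) 1
  | .outlier _, _ => c • Pi.single (.inr 3) 1

def hMu (c : ℝ) : HState d S → LowRankCoord d → ℝ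
  | .init => 0
  | .second i => Pi.single (.inl i) 1
  | .good => Pi.single (.inr 0) 1
  | .bad => Pi.single (.inr 1) 1
  | .outlierHub => Pi.single (.inr 2) 1
  | .outlier _ => c • Pi.single (.inr 3) 1

theorem hP_eq_dotProduct (istar : Fin (d - 4)) (astar : Fin A) (ε : ℝ) {c : ℝ}
    (hc : c * c = 1 / ((S - d : ℕ) : ℝ)) (s : HState d S) (a : Fin A) (s' : HState d S) :
    hP istar astar ε s a s' = hPhi istar astar ε c s a ⬝ᵥ hMu c s' := by
  cases s <;> cases s' <;> simp only [hP, hPhi, hMu] <;> try split_ifs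
  all_goals simp_all [dotProduct_single, Fin.ext_iff] <;> omega

theorem hPhi_dotProduct_self_le_one (istar : Fin (d - 4)) (astar : Fin A) {ε c : ℝ}
    (hε : ε ∈ Set.Icc (0 : ℝ) (1 / 4)) (hc : c * c ≤ 1) (s : HState d S) (a : Fin A) :
    hPhi istar astar ε c s a ⬝ᵥ hPhi istar astar ε c s a ≤ 1 := by
  obtain ⟨hε0, hε1⟩ := hε
  cases s <;> simp only [hP, hPhi] <;> try split_ifs
  all_goals simp [dotProduct_single, hc] <;> nlinarith

theorem hMu_nonneg {c : ℝ} (hc : 0 ≤ c) (s : HState d S) : 0 ≤ hMu c s := by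
  cases s <;> simp [hMu, smul_nonneg hc]

theorem sum_hMu (c : ℝ) :
    ∑ s : HState d S, hMu c s = Sum.elim (fun _ => 1) ![1, 1, 1, (S - d : ℕ) * c] := by
  ext k
  rcases k with i | k
  · simp [HState.sum_univ, hMu, Finset.sum_apply, Pi.single_apply]
  · fin_cases k <;> simp [HState.sum_univ, hMu, Finset.sum_apply]

theorem sum_hMu_dotProduct_self (hd : 4 ≤ d) (hS : d ≤ S) {c : ℝ}
    (hc : c * c = 1 / ((S - d : ℕ) : ℝ)) :
    (∑ s : HState d S, hMu c s) ⬝ᵥ (∑ s : HState d S, hMu c s) = S - 1 := by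
  have hblock : ((S - d : ℕ) * c : ℝ) * ((S - d : ℕ) * c) = (S - d : ℕ) := by
    rw [mul_mul_mul_comm, hc]
    rcases eq_or_ne ((S - d : ℕ) : ℝ) 0 with h | h
    · simp [h]
    · field_simp
  rw [sum_hMu, dotProduct, Fintype.sum_sum_type, Fin.sum_univ_four]
  simp only [Sum.elim_inl, Sum.elim_inr, Matrix.cons_val, mul_one, sum_const, card_univ,
    Fintype.card_fin, nsmul_eq_mul, hblock]
  push_cast [hd, hS]
  ring

theorem isLowRankFactorization_hP (hd : 4 ≤ d) (hS : d ≤ S) (istar : Fin (d - 4))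
    (astar : Fin A) {ε : ℝ} (hε : ε ∈ Set.Icc (0 : ℝ) (1 / 4)) :
    IsLowRankFactorization (hP (S := S) istar astar ε)
      (hPhi istar astar ε (Real.sqrt (S - d : ℕ))⁻¹) (hMu (Real.sqrt (S - d : ℕ))⁻¹)
      (Real.sqrt ((S : ℝ) - 1)) := by
  set c : ℝ := (Real.sqrt (S - d : ℕ))⁻¹
  have hc : c * c = 1 / ((S - d : ℕ) : ℝ) := by
    rw [← mul_inv, Real.mul_self_sqrt (Nat.cast_nonneg _), one_div]
  have hc_le : c * c ≤ 1 := by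
    rw [hc]
    rcases Nat.eq_zero_or_pos (S - d) with h | h
    · simp [h]
    · exact div_le_one_of_le₀ (by exact_mod_cast h) (by positivity)
  refine ⟨hP_eq_dotProduct istar astar ε hc, fun s a => Real.sqrt_le_one.2 ?_, fun g hg => ?_⟩
  · exact hPhi_dotProduct_self_le_one istar astar hε hc_le s a
  · rw [← sum_hMu_dotProduct_self hd hS hc]
    exact Real.sqrt_le_sqrt (dotProduct_self_sum_smul_le_of_nonneg
      (hMu_nonneg (by positivity)) hg)

end Factorization

theorem stmt_11_general (d S A : ℕ) (hd : 8 ≤ d) (hS : d + 1 ≤ S)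
    (ε : ℝ) (hε : ε ∈ Set.Icc (0 : ℝ) (1 / 4))
    (istar : Fin (d - 4)) (astar : Fin A) :
    ∃ (φ : HState d S → Fin A → Fin d → ℝ) (μ : HState d S → Fin d → ℝ),
      (∀ s a s', hP istar astar ε s a s' = φ s a ⬝ᵥ μ s') ∧
      (∀ s a, Real.sqrt (φ s a ⬝ᵥ φ s a) ≤ 1) ∧
      (∀ g : HState d S → ℝ, (∀ s, g s ∈ Set.Icc (0 : ℝ) 1) →
        Real.sqrt ((∑ s, g s • μ s) ⬝ᵥ (∑ s, g s • μ s)) ≤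
          Real.sqrt ((S : ℝ) - 1)) ∧
      (S = d + 1 →
        ∀ g : HState d S → ℝ, (∀ s, g s ∈ Set.Icc (0 : ℝ) 1) →
          Real.sqrt ((∑ s, g s • μ s) ⬝ᵥ (∑ s, g s • μ s)) ≤
            Real.sqrt (d : ℝ)) := by
  let e : Fin d ≃ LowRankCoord d := (finCongr (by omega)).trans finSumFinEquiv.symm
  obtain ⟨hP_eq, hφ, hμ⟩ :=
    (isLowRankFactorization_hP (S := S) (by omega) (by omega) istar astar hε).comp_equiv e
  refine ⟨_, _, hP_eq, hφ, hμ, fun hSd g hg => ?_⟩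
  have hS_sub_one : (S : ℝ) - 1 = d := by
    rw [hSd]
    push_cast
    ring
  exact hS_sub_one ▸ hμ g hg

/-- The hard lower-bound instance `M_{(i*,a*)}` admits a rank-`d` factorization:
there are `φ : 𝒮×𝒜 → ℝ^d` and `μ : 𝒮 → ℝ^d` with
`P(s'|s,a) = ⟨φ(s,a), μ(s')⟩`, `‖φ(s,a)‖₂ ≤ 1`, and
`‖Σ_s μ(s)g(s)‖₂ ≤ √(S−1)` for every `g : 𝒮 → [0,1]`; in particular, when
`S = d+1` the latter bound equals `√d`, so `M_{(i*,a*)}` is a low-rank MDP of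
dimension `d`. -/
theorem stmt_11 (d S A : ℕ) (hd : 8 ≤ d) (hS : d + 1 ≤ S) (hA : d - 3 ≤ A)
    (ε : ℝ) (hε : ε ∈ Set.Icc (0 : ℝ) (1 / 4))
    (istar : Fin (d - 4)) (astar : Fin A) :
    ∃ (φ : HState d S → Fin A → Fin d → ℝ) (μ : HState d S → Fin d → ℝ),
      (∀ s a s', hP istar astar ε s a s' = φ s a ⬝ᵥ μ s') ∧
      (∀ s a, Real.sqrt (φ s a ⬝ᵥ φ s a) ≤ 1) ∧
      (∀ g : HState d S → ℝ, (∀ s, g s ∈ Set.Icc (0 : ℝ) 1) →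
        Real.sqrt ((∑ s, g s • μ s) ⬝ᵥ (∑ s, g s • μ s)) ≤
          Real.sqrt ((S : ℝ) - 1)) ∧
      (S = d + 1 →
        ∀ g : HState d S → ℝ, (∀ s, g s ∈ Set.Icc (0 : ℝ) 1) →
          Real.sqrt ((∑ s, g s • μ s) ⬝ᵥ (∑ s, g s • μ s)) ≤
            Real.sqrt (d : ℝ)) :=
  stmt_11_general d S A hd hS ε hε istar astar
end
end
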